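/- arXiv:1902.10654 — 4 statements merged into one kernel-verified Lean document; each statement's English description precedes it below -/
import Mathlib

section
/- If Eve has a winning strategy in a parity game G with priority co-domain I starting at v, and 2i is the largest even priority in I, then for every k ≥ i, Eve has a winning strategy in the k-register game on G from v. -/
/-!
Eve plays her winning strategy `σ` on the moves of `G` and, on seeing priority `p`, chooses
register `⌊p/2⌋`, which exists because priorities are at most `2i + 1` and `i ≤ k`. Let `P` be
the largest priority recurring along the underlying play of `G`; it is even since `σ` wins.
Once all priorities above `P` have stopped and `P` has been seen again, register `P/2` holds `P`
forever, as smaller priorities go to lower registers or are absorbed by the `max`. From then on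
every output is at most `P`, and each occurrence of `P` outputs `P`, so the largest recurring
output is the even number `P`.
-/


/-- A parity game arena with priorities on edges. `owner v = true` means the
position belongs to Eve; `edge v p w` means there is an edge from `v` to `w`
carrying priority `p`. -/
structure PGame (V : Type) where
  owner : V → Bool
  edge : V → ℕ → V → Prop

/-- The priority `p` occurs infinitely often in the priority sequence `c`. -/
def InfOcc (c : ℕ → ℕ) (p : ℕ) : Prop := ∀ n, ∃ i, n ≤ i ∧ c i = p

/-- Eve wins a play whose sequence of traversed priorities is `c` iff the
largest priority occurring infinitely often is even. -/
def EveWinsPlay (c : ℕ → ℕ) : Prop :=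
  ∃ p, InfOcc c p ∧ Even p ∧ ∀ q, InfOcc c q → q ≤ p

/-- `π` (positions) together with `c` (priorities) forms a play of `G`. -/
def IsPlay {V : Type} (G : PGame V) (π : ℕ → V) (c : ℕ → ℕ) : Prop :=
  ∀ i, G.edge (π i) (c i) (π (i + 1))

/-- A (history-dependent) strategy: given the history of previously visited
positions and the current position, it picks an outgoing edge (priority and
successor). -/
structure Strategy {V : Type} (G : PGame V) where
  next : List V → V → ℕ × V
  valid : ∀ l v, G.edge v (next l v).1 (next l v).2

def histUpTo {V : Type} (π : ℕ → V) (i : ℕ) : List V := List.ofFn (fun j : Fin i => π j)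

/-- The play `(π, c)` agrees with the strategy `σ` of player `b`. -/
def Agrees {V : Type} (G : PGame V) (b : Bool) (σ : Strategy G) (π : ℕ → V) (c : ℕ → ℕ) : Prop :=
  ∀ i, G.owner (π i) = b → (c i, π (i + 1)) = σ.next (histUpTo π i) (π i)

/-- Player `b` (`true` = Eve, `false` = Adam) has a winning strategy from `v`. -/
def WinsFrom {V : Type} (G : PGame V) (b : Bool) (v : V) : Prop :=
  ∃ σ : Strategy G, ∀ π c, IsPlay G π c → π 0 = v → Agrees G b σ π c →
    (if b = true then EveWinsPlay c else ¬ EveWinsPlay c)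

/-- Register update: registers below `i` are reset to `0`, register `i` is set
to `p`, registers above `i` become `max (r j) p`. -/
def newReg {k : ℕ} (r : Fin (k + 1) → ℕ) (i : Fin (k + 1)) (p : ℕ) : Fin (k + 1) → ℕ :=
  fun j => if j < i then 0 else if j = i then p else max (r j) p

/-- Output produced when Eve chooses register `i` upon seeing priority `p`. -/
def outE {k : ℕ} (r : Fin (k + 1) → ℕ) (i : Fin (k + 1)) (p : ℕ) : ℕ :=
  if Even (max (r i) p) then 2 * i.1 else 2 * i.1 + 1

/-- Output produced when Adam chooses register `i` (Adam-controlled variant). -/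
def outA {k : ℕ} (r : Fin (k + 1) → ℕ) (i : Fin (k + 1)) (p : ℕ) : ℕ :=
  if Even (r i) then 2 * i.1 + 2 else 2 * i.1 + 1

/-- Positions of the `k`-register game: a position of `G`, the register
contents, and `none` (a move of `G` is next) or `some p` (the register
controller must choose a register, `p` being the priority just seen). -/
abbrev RegPos (V : Type) (k : ℕ) : Type := V × (Fin (k + 1) → ℕ) × Option ℕ

/-- The `k`-register game on `G` in which Eve controls the registers. -/
def regGameE {V : Type} (G : PGame V) (k : ℕ) : PGame (RegPos V k) where
  owner := fun s => match s.2.2 with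
    | none => G.owner s.1
    | some _ => true
  edge := fun s o s' => match s, s' with
    | (v, r, none), (w, r', some p) => G.edge v p w ∧ r' = r ∧ o = 0
    | (v, r, some p), (w, r', none) => w = v ∧ ∃ i, r' = newReg r i p ∧ o = outE r i p
    | _, _ => False

/-- The `k`-register game on `G` in which Adam controls the registers. -/
def regGameA {V : Type} (G : PGame V) (k : ℕ) : PGame (RegPos V k) where
  owner := fun s => match s.2.2 with
    | none => G.owner s.1
    | some _ => false
  edge := fun s o s' => match s, s' with
    | (v, r, none), (w, r', some p) => G.edge v p w ∧ r' = r ∧ o = 0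
    | (v, r, some p), (w, r', none) => w = v ∧ ∃ i, r' = newReg r i p ∧ o = outA r i p
    | _, _ => False

open Filter

lemma infOcc_iff_frequently {c : ℕ → ℕ} {p : ℕ} : InfOcc c p ↔ ∃ᶠ n in atTop, c n = p :=
  frequently_atTop.symm

lemma eventually_le_of_forall_infOcc_le {c : ℕ → ℕ} {B P : ℕ} (hB : ∀ n, c n ≤ B)
    (hP : ∀ q, InfOcc c q → q ≤ P) : ∀ᶠ n in atTop, c n ≤ P := by
  have hfin : ∀ q ∈ Finset.Ioc P B, ∀ᶠ n in atTop, c n ≠ q := fun q hq =>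
    not_frequently.1 fun hq' => by
      have := hP q (infOcc_iff_frequently.2 hq')
      rw [Finset.mem_Ioc] at hq
      omega
  filter_upwards [(eventually_all_finset _).2 hfin] with n hn
  by_contra hlt
  exact hn (c n) (Finset.mem_Ioc.2 ⟨not_le.1 hlt, hB n⟩) rfl

lemma EveWinsPlay.interleave {c o : ℕ → ℕ} {δ : ℕ} (h : EveWinsPlay o)
    (heven : ∀ j, c (2 * j + δ) = 0) (hodd : ∀ j, c (2 * j + δ + 1) = o j) :
    EveWinsPlay c := by
  obtain ⟨P, hPinf, hPeven, hPmax⟩ := h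
  refine ⟨P, fun n => ?_, hPeven, fun q hq => ?_⟩
  · obtain ⟨j, hj, hoj⟩ := hPinf n
    exact ⟨2 * j + δ + 1, by omega, by rw [hodd, hoj]⟩
  · rcases Nat.eq_zero_or_pos q with rfl | hq0
    · exact Nat.zero_le P
    refine hPmax q fun n => ?_
    obtain ⟨m, hm, hcm⟩ := hq (2 * n + δ)
    obtain ⟨j, rfl | rfl⟩ : ∃ j, m = 2 * j + δ ∨ m = 2 * j + δ + 1 := ⟨(m - δ) / 2, by omega⟩
    · rw [heven] at hcm
      omega
    · exact ⟨j, by omega, by rw [← hodd, hcm]⟩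

section Registers

def regChoice (k p : ℕ) : Fin (k + 1) := ⟨min (p / 2) k, Nat.lt_succ_of_le (min_le_right _ _)⟩

variable {k p P : ℕ} {r : Fin (k + 1) → ℕ}

lemma newReg_apply_self (i : Fin (k + 1)) : newReg r i p i = p := by
  simp [newReg]

lemma eq_of_regChoice_eq (hP : Even P) (hPk : P / 2 ≤ k) (hp : p ≤ P)
    (h : regChoice k p = regChoice k P) : p = P := by
  obtain ⟨m, rfl⟩ := hP
  simp only [regChoice, Fin.ext_iff] at h
  omega

lemma regChoice_lt_of_ne (hPk : P / 2 ≤ k) (hp : p ≤ P) (h : regChoice k p ≠ regChoice k P) :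
    (regChoice k p : ℕ) < P / 2 := by
  simp only [regChoice, ne_eq, Fin.ext_iff] at h ⊢
  omega

lemma newReg_regChoice_apply_of_le (hP : Even P) (hPk : P / 2 ≤ k) (hp : p ≤ P)
    (hr : r (regChoice k P) = P) : newReg r (regChoice k p) p (regChoice k P) = P := by
  by_cases h : regChoice k p = regChoice k P
  · rw [h, eq_of_regChoice_eq hP hPk hp h, newReg_apply_self]
  · have hlt := regChoice_lt_of_ne hPk hp h
    have hval : (regChoice k P : ℕ) = P / 2 := min_eq_left hPk
    have hnlt : ¬ regChoice k P < regChoice k p := by rw [Fin.lt_def]; omega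
    simp only [newReg, hnlt, Ne.symm h, if_false, hr]
    omega

lemma outE_regChoice_self (hP : Even P) (hPk : P / 2 ≤ k) (hr : r (regChoice k P) = P) :
    outE r (regChoice k P) P = P := by
  have hval : (regChoice k P : ℕ) = P / 2 := min_eq_left hPk
  rw [outE, hr, max_self, if_pos hP, hval, Nat.mul_div_cancel' (even_iff_two_dvd.1 hP)]

lemma outE_regChoice_le (hP : Even P) (hPk : P / 2 ≤ k) (hp : p ≤ P)
    (hr : r (regChoice k P) = P) : outE r (regChoice k p) p ≤ P := by
  by_cases h : regChoice k p = regChoice k P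
  · rw [h, eq_of_regChoice_eq hP hPk hp h, outE_regChoice_self hP hPk hr]
  · have hlt := regChoice_lt_of_ne hPk hp h
    unfold outE
    split_ifs <;> omega

theorem eveWinsPlay_regOutputs {i : ℕ} (hk : i ≤ k) {p : ℕ → ℕ} (hbound : ∀ j, p j ≤ 2 * i + 1)
    (hwin : EveWinsPlay p) {R : ℕ → Fin (k + 1) → ℕ}
    (hR : ∀ j, R (j + 1) = newReg (R j) (regChoice k (p j)) (p j)) :
    EveWinsPlay fun j => outE (R j) (regChoice k (p j)) (p j) := by
  obtain ⟨P, hPinf, hPeven, hPmax⟩ := hwin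
  obtain ⟨N, hN⟩ := eventually_atTop.1 (eventually_le_of_forall_infOcc_le hbound hPmax)
  obtain ⟨j₀, hj₀N, hj₀⟩ := hPinf N
  have hPk : P / 2 ≤ k := by have := hbound j₀; omega
  have hreg : ∀ j, j₀ + 1 ≤ j → R j (regChoice k P) = P := by
    intro j hj
    induction j, hj using Nat.le_induction with
    | base => rw [hR, hj₀, newReg_apply_self]
    | succ j hj ih => rw [hR, newReg_regChoice_apply_of_le hPeven hPk (hN j (by omega)) ih]
  refine ⟨P, fun n => ?_, hPeven, fun q hq => ?_⟩
  · obtain ⟨j, hj, hpj⟩ := hPinf (max n (j₀ + 1))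
    refine ⟨j, le_of_max_le_left hj, ?_⟩
    simp only [hpj, outE_regChoice_self hPeven hPk (hreg j (le_of_max_le_right hj))]
  · obtain ⟨j, hj, rfl⟩ := hq (j₀ + 1)
    exact outE_regChoice_le hPeven hPk (hN j (by omega)) (hreg j hj)

end Registers

section Projection

variable {V : Type} {G : PGame V} {k : ℕ}

/-- The positions of `G` in a history of the register game are those where a move of `G` is
next. -/
def baseHist (l : List (RegPos V k)) : List V :=
  (l.filter fun s => s.2.2.isNone).map Prod.fst

lemma baseHist_append_none (l : List (RegPos V k)) (s : RegPos V k) (hs : s.2.2 = none) :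
    baseHist (l ++ [s]) = baseHist l ++ [s.1] := by
  simp [baseHist, hs]

lemma baseHist_append_some (l : List (RegPos V k)) (s : RegPos V k) (p : ℕ) (hs : s.2.2 = some p) :
    baseHist (l ++ [s]) = baseHist l := by
  simp [baseHist, hs]

lemma histUpTo_succ {α : Type} (π : ℕ → α) (n : ℕ) :
    histUpTo π (n + 1) = histUpTo π n ++ [π n] := by
  simp only [histUpTo, List.ofFn_succ', List.concat_eq_append, Fin.val_castSucc, Fin.val_last]

variable (G k) in
def regStrategy (σ : Strategy G) : Strategy (regGameE G k) where
  next l s := match s with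
    | (u, r, none) => (0, ((σ.next (baseHist l) u).2, r, some (σ.next (baseHist l) u).1))
    | (u, r, some p) => (outE r (regChoice k p) p, (u, newReg r (regChoice k p) p, none))
  valid := by
    rintro l ⟨u, r, _ | p⟩
    · exact ⟨σ.valid _ _, rfl, rfl⟩
    · exact ⟨rfl, regChoice k p, rfl, rfl⟩

variable {σ : Strategy G} {π : ℕ → RegPos V k} {c : ℕ → ℕ}

lemma regGameE_step_of_none (hplay : IsPlay (regGameE G k) π c) {n : ℕ} (hn : (π n).2.2 = none) :
    ∃ p, G.edge (π n).1 p (π (n + 1)).1 ∧ (π (n + 1)).2 = ((π n).2.1, some p) ∧ c n = 0 := by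
  have hedge := hplay n
  rcases hπn : π n with ⟨u, r, t⟩
  rcases hπn' : π (n + 1) with ⟨w, r', _ | p⟩
  all_goals rw [hπn] at hn hedge; rw [hπn'] at hedge; subst hn
  · exact hedge.elim
  · obtain ⟨he, rfl, hc⟩ := hedge
    exact ⟨p, he, rfl, hc⟩

lemma regStrategy_step_of_some (hagree : Agrees (regGameE G k) true (regStrategy G k σ) π c)
    {n p : ℕ} (hn : (π n).2.2 = some p) :
    c n = outE (π n).2.1 (regChoice k p) p ∧
      π (n + 1) = ((π n).1, newReg (π n).2.1 (regChoice k p) p, none) := by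
  rcases hπn : π n with ⟨u, r, t⟩
  rw [hπn] at hn
  subst hn
  have h := hagree n (by rw [hπn]; rfl)
  rw [hπn] at h
  exact Prod.mk.inj h

lemma regStrategy_step_of_none (hagree : Agrees (regGameE G k) true (regStrategy G k σ) π c)
    {n : ℕ} (hn : (π n).2.2 = none) (hown : G.owner (π n).1 = true) :
    some (σ.next (baseHist (histUpTo π n)) (π n).1).1 = (π (n + 1)).2.2 ∧
      (σ.next (baseHist (histUpTo π n)) (π n).1).2 = (π (n + 1)).1 := by
  rcases hπn : π n with ⟨u, r, t⟩
  rw [hπn] at hn hown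
  subst hn
  have h := hagree n (by rw [hπn]; exact hown)
  rw [hπn] at h
  rw [(Prod.mk.inj h).2]
  exact ⟨rfl, rfl⟩

lemma regStrategy_round (hplay : IsPlay (regGameE G k) π c)
    (hagree : Agrees (regGameE G k) true (regStrategy G k σ) π c) {n : ℕ} (hn : (π n).2.2 = none) :
    ∃ p, G.edge (π n).1 p (π (n + 1)).1 ∧ (π (n + 1)).2.2 = some p ∧ c n = 0 ∧
      c (n + 1) = outE (π n).2.1 (regChoice k p) p ∧
      π (n + 1 + 1) = ((π (n + 1)).1, newReg (π n).2.1 (regChoice k p) p, none) := by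
  obtain ⟨p, hedge, hnext, hc⟩ := regGameE_step_of_none hplay hn
  have hreg : (π (n + 1)).2.1 = (π n).2.1 := by rw [hnext]
  have hsome : (π (n + 1)).2.2 = some p := by rw [hnext]
  rw [← hreg]
  exact ⟨p, hedge, hsome, hc, regStrategy_step_of_some hagree hsome⟩

lemma regStrategy_exists_start (hagree : Agrees (regGameE G k) true (regStrategy G k σ) π c) :
    ∃ δ, (π δ).1 = (π 0).1 ∧ (π δ).2.2 = none ∧ baseHist (histUpTo π δ) = [] := by
  rcases h0 : (π 0).2.2 with _ | p
  · exact ⟨0, rfl, h0, rfl⟩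
  · have h1 := (regStrategy_step_of_some hagree h0).2
    refine ⟨1, by rw [h1], by rw [h1], ?_⟩
    rw [histUpTo_succ, baseHist_append_some _ _ p h0]
    rfl

theorem regStrategy_exists_basePlay (hplay : IsPlay (regGameE G k) π c)
    (hagree : Agrees (regGameE G k) true (regStrategy G k σ) π c) :
    ∃ (δ : ℕ) (u : ℕ → V) (p : ℕ → ℕ) (R : ℕ → Fin (k + 1) → ℕ),
      u 0 = (π 0).1 ∧ IsPlay G u p ∧ Agrees G true σ u p ∧
      (∀ j, R (j + 1) = newReg (R j) (regChoice k (p j)) (p j)) ∧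
      (∀ j, c (2 * j + δ) = 0) ∧ ∀ j, c (2 * j + δ + 1) = outE (R j) (regChoice k (p j)) (p j) := by
  obtain ⟨δ, hv, hδ, hhist₀⟩ := regStrategy_exists_start hagree
  have hidx : ∀ j, 2 * (j + 1) + δ = 2 * j + δ + 1 + 1 := fun j => by ring
  have hphase : ∀ j, (π (2 * j + δ)).2.2 = none := by
    intro j
    induction j with
    | zero => simpa using hδ
    | succ j ih =>
      obtain ⟨p, -, -, -, -, hnext⟩ := regStrategy_round hplay hagree ih
      rw [hidx, hnext]
  choose p hedge hsome hc₀ hc₁ hnext using fun j => regStrategy_round hplay hagree (hphase j)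
  have hhist :
      ∀ j, baseHist (histUpTo π (2 * j + δ)) = histUpTo (fun j => (π (2 * j + δ)).1) j := by
    intro j
    induction j with
    | zero => rw [Nat.mul_zero, Nat.zero_add, hhist₀]; rfl
    | succ j ih =>
      rw [hidx, histUpTo_succ, histUpTo_succ, baseHist_append_some _ _ _ (hsome j),
        baseHist_append_none _ _ (hphase j), ih, histUpTo_succ]
  refine ⟨δ, fun j => (π (2 * j + δ)).1, p, fun j => (π (2 * j + δ)).2.1, by simpa using hv,
    fun j => ?_, fun j hown => ?_, fun j => ?_, hc₀, hc₁⟩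
  · show G.edge _ _ (π (2 * (j + 1) + δ)).1
    rw [hidx, hnext]
    exact hedge j
  · obtain ⟨hprio, hpos⟩ := regStrategy_step_of_none hagree (hphase j) hown
    rw [hsome] at hprio
    show (p j, (π (2 * (j + 1) + δ)).1) = σ.next (histUpTo _ j) _
    rw [← hhist, hidx, hnext]
    exact Prod.ext (Option.some_injective _ hprio).symm hpos.symm
  · show (π (2 * (j + 1) + δ)).2.1 = _
    rw [hidx, hnext]

end Projection

/-- If Eve has a winning strategy in a parity game `G` whose
priority co-domain has largest even priority `2 * i` (so all priorities are at
most `2 * i + 1`) starting at `v`, then for every `k ≥ i` Eve has a winning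
strategy in the `k`-register game on `G` from `v` (from every register
configuration). -/
theorem stmt1 {V : Type} (G : PGame V) (v : V) (i : ℕ)
    (hI : ∀ u p w, G.edge u p w → p ≤ 2 * i + 1)
    (h : WinsFrom G true v) (k : ℕ) (hk : i ≤ k)
    (r : Fin (k + 1) → ℕ) (t : Option ℕ) :
    WinsFrom (regGameE G k) true (v, r, t) := by
  obtain ⟨σ, hσ⟩ := h
  refine ⟨regStrategy G k σ, fun π c hplay h0 hagree => ?_⟩
  obtain ⟨δ, u, p, R, hu, hGplay, hGagree, hR, hc₀, hc₁⟩ := regStrategy_exists_basePlay hplay hagree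
  have hGwin : EveWinsPlay p := by
    simpa using hσ u p hGplay (by rw [hu, h0]) hGagree
  have hwin := eveWinsPlay_regOutputs hk (fun j => hI _ _ _ (hGplay j)) hGwin hR
  simpa using hwin.interleave hc₀ hc₁
end

section
/- In the k-register game, if a player has a winning strategy from some position (v, r, t) (for a particular register configuration r and turn bit t), then that player has a winning strategy from every position (v, r', t') with the same underlying vertex v. -/
namespace Stmt3Aux


lemma infOcc_congr {c c' : ℕ → ℕ} (h : ∃ N, ∀ n, N ≤ n → c n = c' n) (p : ℕ) :
    InfOcc c p ↔ InfOcc c' p := by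
  obtain ⟨N, hN⟩ := h
  constructor <;> intro hi n
  · obtain ⟨i, hi1, hi2⟩ := hi (max n N)
    exact ⟨i, le_trans (le_max_left _ _) hi1, by rw [← hN i (le_trans (le_max_right _ _) hi1)]; exact hi2⟩
  · obtain ⟨i, hi1, hi2⟩ := hi (max n N)
    exact ⟨i, le_trans (le_max_left _ _) hi1, by rw [hN i (le_trans (le_max_right _ _) hi1)]; exact hi2⟩

lemma eveWins_congr {c c' : ℕ → ℕ} (h : ∃ N, ∀ n, N ≤ n → c n = c' n) :
    EveWinsPlay c ↔ EveWinsPlay c' := by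
  unfold EveWinsPlay
  constructor <;> rintro ⟨p, h1, h2, h3⟩
  · exact ⟨p, (infOcc_congr h p).1 h1, h2, fun q hq => h3 q ((infOcc_congr h q).2 hq)⟩
  · exact ⟨p, (infOcc_congr h p).2 h1, h2, fun q hq => h3 q ((infOcc_congr h q).1 hq)⟩

lemma infOcc_tail {c : ℕ → ℕ} (p : ℕ) : InfOcc (fun n => c (n+1)) p ↔ InfOcc c p := by
  constructor <;> intro hi n
  · obtain ⟨i, hi1, hi2⟩ := hi n
    exact ⟨i+1, le_trans hi1 (Nat.le_succ i), hi2⟩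
  · obtain ⟨i, hi1, hi2⟩ := hi (n+1)
    obtain ⟨j, rfl⟩ : ∃ j, i = j + 1 := ⟨i - 1, by omega⟩
    exact ⟨j, by omega, hi2⟩

lemma eveWins_tail {c : ℕ → ℕ} : EveWinsPlay (fun n => c (n+1)) ↔ EveWinsPlay c := by
  unfold EveWinsPlay
  constructor <;> rintro ⟨p, h1, h2, h3⟩
  · exact ⟨p, (infOcc_tail p).1 h1, h2, fun q hq => h3 q ((infOcc_tail q).2 hq)⟩
  · exact ⟨p, (infOcc_tail p).2 h1, h2, fun q hq => h3 q ((infOcc_tail q).1 hq)⟩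

/-- winning-after-one-step: if σ wins for b from s, the edge (s,o,s') is in the game,
and if b owns s then (o,s') is σ's move at the empty history, then b wins from s'. -/
lemma step_wins {V : Type} {G : PGame V} {b : Bool} {s s' : V} {o : ℕ} (σ : Strategy G)
    (hσ : ∀ π c, IsPlay G π c → π 0 = s → Agrees G b σ π c →
      (if b = true then EveWinsPlay c else ¬ EveWinsPlay c))
    (he : G.edge s o s')
    (hmv : G.owner s = b → (o, s') = σ.next [] s) :
    WinsFrom G b s' := by
  refine ⟨⟨fun l u => σ.next (s :: l) u, fun l u => σ.valid _ _⟩, ?_⟩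
  intro π' c' hp' h0' ha'
  set π : ℕ → V := fun n => Nat.rec s (fun m _ => π' m) n with hπ
  set c : ℕ → ℕ := fun n => Nat.rec o (fun m _ => c' m) n with hc
  have hist : ∀ n, histUpTo π (n+1) = s :: histUpTo π' n := by
    intro n
    simp only [histUpTo, List.ofFn_succ]
    rfl
  have hp : IsPlay G π c := by
    intro i
    cases i with
    | zero => simpa [hπ, hc, h0'] using he
    | succ m => exact hp' m
  have ha : Agrees G b σ π c := by
    intro i hb
    cases i with
    | zero =>
      have hh : histUpTo π 0 = [] := by simp [histUpTo]
      rw [hh]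
      show (o, π' 0) = σ.next [] s
      rw [h0']; exact hmv hb
    | succ m =>
      have := ha' m hb
      rw [hist m]
      exact this
  have hw := hσ π c hp rfl ha
  have hcc : EveWinsPlay c' ↔ EveWinsPlay c := by
    have : c' = fun n => c (n+1) := rfl
    rw [this, eveWins_tail]
  by_cases hb : b = true
  · rw [if_pos hb] at hw ⊢; exact hcc.2 hw
  · rw [if_neg hb] at hw ⊢; exact fun hE => hw (hcc.1 hE)

lemma shift_own {V : Type} {G : PGame V} {b : Bool} {s : V}
    (h : WinsFrom G b s) (hown : G.owner s = b) :
    ∃ o s', G.edge s o s' ∧ WinsFrom G b s' := by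
  obtain ⟨σ, hσ⟩ := h
  exact ⟨(σ.next [] s).1, (σ.next [] s).2, σ.valid [] s,
    step_wins σ hσ (σ.valid [] s) (fun _ => rfl)⟩

lemma shift_opp {V : Type} {G : PGame V} {b : Bool} {s s' : V} {o : ℕ}
    (h : WinsFrom G b s) (hown : G.owner s ≠ b) (he : G.edge s o s') :
    WinsFrom G b s' := by
  obtain ⟨σ, hσ⟩ := h
  exact step_wins σ hσ he (fun hb => absurd hb hown)


open Classical in
/-- If b owns s and some edge leads to a winning position, b wins from s. -/
lemma prepend_own {V : Type} {G : PGame V} {b : Bool} {s s' : V} {o : ℕ}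
    (hown : G.owner s = b) (he : G.edge s o s') (h : WinsFrom G b s') :
    WinsFrom G b s := by
  obtain ⟨σ, hσ⟩ := h
  refine ⟨⟨fun l u => match l with
    | [] => if hu : u = s then (o, s') else σ.next [] u
    | _ :: tl => σ.next tl u, ?_⟩, ?_⟩
  · intro l u
    match l with
    | [] =>
      by_cases hu : u = s
      · subst hu; simpa using he
      · simpa [hu] using σ.valid [] u
    | x :: tl => exact σ.valid tl u
  · intro π c hp h0 ha
    have h1 : π 1 = s' ∧ c 0 = o := by
      have := ha 0 (by rw [h0]; exact hown)
      rw [h0] at this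
      have hh : histUpTo π 0 = [] := by simp [histUpTo]
      rw [hh] at this
      simp only [dif_pos rfl] at this
      exact ⟨(Prod.mk.injEq _ _ _ _ ▸ this).2, (Prod.mk.injEq _ _ _ _ ▸ this).1⟩
    set π' : ℕ → V := fun n => π (n+1) with hπ'
    set c' : ℕ → ℕ := fun n => c (n+1) with hc'
    have hist : ∀ n, histUpTo π (n+1) = s :: histUpTo π' n := by
      intro n
      simp only [histUpTo, List.ofFn_succ, Fin.val_zero, h0]
      rfl
    have ha' : Agrees G b σ π' c' := by
      intro i hb
      have := ha (i+1) hb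
      rw [hist i] at this
      exact this
    have hw := hσ π' c' (fun i => hp (i+1)) h1.1 ha'
    have hcc : EveWinsPlay c' ↔ EveWinsPlay c := eveWins_tail
    by_cases hb : b = true
    · rw [if_pos hb] at hw ⊢; exact hcc.1 hw
    · rw [if_neg hb] at hw ⊢; exact fun hE => hw (hcc.2 hE)

open Classical in
/-- If b does not own s and all successors are winning for b, then b wins from s
(provided some strategy exists at all). -/
lemma prepend_opp {V : Type} {G : PGame V} {b : Bool} {s : V} (σany : Strategy G)
    (hown : G.owner s ≠ b) (h : ∀ o s', G.edge s o s' → WinsFrom G b s') :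
    WinsFrom G b s := by
  set F : V → Strategy G := fun u => if h : WinsFrom G b u then h.choose else σany with hF
  refine ⟨⟨fun l u => match l with
    | [] => σany.next [] u
    | _ :: tl => (F (tl.headD u)).next tl u, ?_⟩, ?_⟩
  · intro l u
    match l with
    | [] => exact σany.valid [] u
    | x :: tl => exact (F (tl.headD u)).valid tl u
  · intro π c hp h0 ha
    set π' : ℕ → V := fun n => π (n+1) with hπ'
    set c' : ℕ → ℕ := fun n => c (n+1) with hc'
    have hw1 : WinsFrom G b (π 1) := h (c 0) (π 1) (by rw [← h0]; exact hp 0)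
    have hist : ∀ n, histUpTo π (n+1) = π 0 :: histUpTo π' n := by
      intro n
      simp only [histUpTo, List.ofFn_succ, Fin.val_zero]
      rfl
    have hhead : ∀ n, (histUpTo π' n).headD (π (n+1)) = π 1 := by
      intro n
      cases n with
      | zero => simp [histUpTo]
      | succ m => simp [histUpTo, List.ofFn_succ]; rfl
    have ha' : Agrees G b (F (π 1)) π' c' := by
      intro i hb
      have := ha (i+1) hb
      rw [hist i] at this
      simp only at this
      rw [hhead i] at this
      exact this
    have hσ1 := hw1.choose_spec
    have hF1 : F (π 1) = hw1.choose := by rw [hF]; simp [hw1]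
    have hw := hσ1 π' c' (fun i => hp (i+1)) rfl (by rw [← hF1]; exact ha')
    have hcc : EveWinsPlay c' ↔ EveWinsPlay c := eveWins_tail
    by_cases hb : b = true
    · rw [if_pos hb] at hw ⊢; exact hcc.1 hw
    · rw [if_neg hb] at hw ⊢; exact fun hE => hw (hcc.2 hE)


section Core

variable {V : Type} {k : ℕ}

abbrev Regs (k : ℕ) := Fin (k+1) → ℕ

lemma newReg_congr {a a' : Regs k} {i j : Fin (k+1)} {p : ℕ} (h : a j = a' j) :
    newReg a i p j = newReg a' i p j := by
  unfold newReg
  split_ifs <;> simp [h]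

lemma outE_congr {a a' : Regs k} {i : Fin (k+1)} {p : ℕ} (h : a i = a' i) :
    outE a i p = outE a' i p := by
  unfold outE
  rw [h]

/-- two distinct witnesses for the same register update force priority 0 and
zero register contents in between. -/
lemma wit_pair {a : Regs k} {p : ℕ} {i i' : Fin (k+1)} (hlt : i < i')
    (h : newReg a i p = newReg a i' p) : p = 0 ∧ ∀ j, i < j → j ≤ i' → a j = 0 := by
  have hp : p = 0 := by
    have := congrFun h i
    simp only [newReg, lt_irrefl, if_false, if_pos rfl, if_pos hlt, lt_self_iff_false,
      reduceIte] at this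
    simpa [hlt] using this
  subst hp
  refine ⟨rfl, fun j hij hji => ?_⟩
  have := congrFun h j
  have h1 : ¬ j < i := not_lt.2 (le_of_lt hij)
  have h2 : j ≠ i := ne_of_gt hij
  simp only [newReg, if_neg h1, if_neg h2] at this
  rcases lt_or_eq_of_le hji with hlt2 | heq
  · rw [if_pos hlt2] at this
    simpa using this
  · rw [if_neg (not_lt.2 (le_of_eq heq.symm)), if_pos heq] at this
    simpa using this

open Classical

/-- index of σ's register choice, extracted from its move. -/
noncomputable def extIdx (R : Regs k) (p : ℕ) (m : ℕ × RegPos V k) : Fin (k+1) :=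
  if h : ∃ i : Fin (k+1), m.2.2.1 = newReg R i p ∧ m.1 = outE R i p then h.choose else 0

/-- the largest register index consistent with an observed register update. -/
noncomputable def witIdx (a a' : Regs k) (p : ℕ) : Fin (k+1) :=
  if h : (Finset.univ.filter (fun i : Fin (k+1) => a' = newReg a i p)).Nonempty
  then (Finset.univ.filter (fun i : Fin (k+1) => a' = newReg a i p)).max' h else 0

lemma witIdx_spec {a a' : Regs k} {p : ℕ} {i : Fin (k+1)} (h : a' = newReg a i p) :
    a' = newReg a (witIdx a a' p) p ∧ i ≤ witIdx a a' p := by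
  have hne : (Finset.univ.filter (fun i : Fin (k+1) => a' = newReg a i p)).Nonempty :=
    ⟨i, by simp [h]⟩
  rw [witIdx, dif_pos hne]
  constructor
  · have := Finset.max'_mem _ hne
    simpa using this
  · exact Finset.le_max' _ i (by simp [h])

lemma extIdx_spec {R : Regs k} {p : ℕ} {m : ℕ × RegPos V k}
    (h : ∃ i : Fin (k+1), m.2.2.1 = newReg R i p ∧ m.1 = outE R i p) :
    m.2.2.1 = newReg R (extIdx R p m) p ∧ m.1 = outE R (extIdx R p m) p := by
  rw [extIdx, dif_pos h]
  exact h.choose_spec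

/-- the register contents of the next virtual position. -/
noncomputable def vreg (G : PGame V) (σ : Strategy (regGameE G k)) (b : Bool)
    (vacc : List (RegPos V k)) (sprev scur : RegPos V k) : Regs k :=
  ((vacc.getLastD scur).2.2).elim (vacc.getLastD scur).2.1
    (fun p => newReg (vacc.getLastD scur).2.1
      (if b then extIdx (vacc.getLastD scur).2.1 p (σ.next vacc.dropLast (vacc.getLastD scur))
       else witIdx sprev.2.1 scur.2.1 p) p)

/-- the next virtual position. -/
noncomputable def vnext (G : PGame V) (σ : Strategy (regGameE G k)) (b : Bool)
    (vacc : List (RegPos V k)) (sprev scur : RegPos V k) : RegPos V k :=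
  (scur.1, vreg G σ b vacc sprev scur, scur.2.2)

noncomputable def reconGo (G : PGame V) (σ : Strategy (regGameE G k)) (b : Bool) :
    List (RegPos V k) → RegPos V k → List (RegPos V k) → List (RegPos V k)
  | vacc, _, [] => vacc
  | vacc, sprev, s :: rest => reconGo G σ b (vacc ++ [vnext G σ b vacc sprev s]) s rest

noncomputable def recon (G : PGame V) (σ : Strategy (regGameE G k)) (b : Bool) (r : Regs k) :
    List (RegPos V k) → List (RegPos V k)
  | [] => []
  | x :: xs => reconGo G σ b [(x.1, r, x.2.2)] x xs

lemma reconGo_snoc (G : PGame V) (σ : Strategy (regGameE G k)) (b : Bool) :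
    ∀ (xs : List (RegPos V k)) (vacc : List (RegPos V k)) (sprev u : RegPos V k),
      reconGo G σ b vacc sprev (xs ++ [u]) =
        reconGo G σ b vacc sprev xs ++
          [vnext G σ b (reconGo G σ b vacc sprev xs) (xs.getLastD sprev) u] := by
  intro xs
  induction xs with
  | nil => intro vacc sprev u; simp [reconGo]
  | cons x xs ih =>
    intro vacc sprev u
    simp only [List.cons_append, reconGo, List.getLastD_cons]
    exact ih _ x u

lemma recon_snoc (G : PGame V) (σ : Strategy (regGameE G k)) (b : Bool) (r : Regs k)
    (x : RegPos V k) (xs : List (RegPos V k)) (u : RegPos V k) :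
    recon G σ b r ((x :: xs) ++ [u]) =
      recon G σ b r (x :: xs) ++
        [vnext G σ b (recon G σ b r (x :: xs)) (xs.getLastD x) u] := by
  simp only [List.cons_append, recon, reconGo_snoc]

lemma recon_last (G : PGame V) (σ : Strategy (regGameE G k)) (b : Bool) (r : Regs k)
    (l : List (RegPos V k)) (u : RegPos V k) :
    ∃ ρ : Regs k, (recon G σ b r (l ++ [u])).getLastD u = (u.1, ρ, u.2.2) := by
  cases l with
  | nil => exact ⟨r, by simp [recon, reconGo]⟩
  | cons x xs =>
    refine ⟨vreg G σ b (recon G σ b r (x :: xs)) (xs.getLastD x) u, ?_⟩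
    rw [recon_snoc, List.getLastD_concat]
    rfl

/-- the transferred ("mimicking") strategy. -/
noncomputable def mimic (G : PGame V) (σ : Strategy (regGameE G k)) (b : Bool)
    (r : Regs k) : Strategy (regGameE G k) where
  next := fun l u =>
    (u.2.2).elim
      ((σ.next (recon G σ b r (l ++ [u])).dropLast ((recon G σ b r (l ++ [u])).getLastD u)).1,
        ((σ.next (recon G σ b r (l ++ [u])).dropLast ((recon G σ b r (l ++ [u])).getLastD u)).2.1,
          u.2.1,
          (σ.next (recon G σ b r (l ++ [u])).dropLast ((recon G σ b r (l ++ [u])).getLastD u)).2.2.2))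
      (fun p =>
        (outE u.2.1 (if b then extIdx ((recon G σ b r (l ++ [u])).getLastD u).2.1 p
            (σ.next (recon G σ b r (l ++ [u])).dropLast ((recon G σ b r (l ++ [u])).getLastD u))
          else 0) p,
         (u.1, newReg u.2.1 (if b then extIdx ((recon G σ b r (l ++ [u])).getLastD u).2.1 p
            (σ.next (recon G σ b r (l ++ [u])).dropLast ((recon G σ b r (l ++ [u])).getLastD u))
          else 0) p, none)))
  valid := by
    intro l u
    obtain ⟨ρ, hvc⟩ := recon_last G σ b r l u
    rcases u with ⟨x, a, o⟩
    cases o with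
    | some p => exact ⟨rfl, _, rfl, rfl⟩
    | none =>
      have hval := σ.valid (recon G σ b r (l ++ [(x, a, none)])).dropLast
        ((recon G σ b r (l ++ [(x, a, none)])).getLastD (x, a, none))
      dsimp only at hvc hval ⊢
      rw [hvc] at hval
      rw [hvc]
      set m := σ.next (recon G σ b r (l ++ [(x, a, none)])).dropLast (x, ρ, none) with hm
      rcases hm2 : m.2 with ⟨w, R2, o2⟩
      rw [hm2] at hval
      cases o2 with
      | none => exact absurd hval (by simp [regGameE])
      | some p =>
        obtain ⟨hG, hR, ho⟩ := hval
        exact ⟨hG, rfl, ho⟩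

lemma recon_snoc' (G : PGame V) (σ : Strategy (regGameE G k)) (b : Bool) (r : Regs k)
    {l : List (RegPos V k)} (hl : l ≠ []) (u : RegPos V k) :
    recon G σ b r (l ++ [u]) =
      recon G σ b r l ++ [vnext G σ b (recon G σ b r l) (l.getLastD u) u] := by
  cases l with
  | nil => exact absurd rfl hl
  | cons x xs => rw [recon_snoc, List.getLastD_cons]

/-- the lists of virtual positions along a real play. -/
noncomputable def VL (G : PGame V) (σ : Strategy (regGameE G k)) (b : Bool) (r : Regs k)
    (π : ℕ → RegPos V k) : ℕ → List (RegPos V k)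
  | 0 => []
  | 1 => [((π 0).1, r, (π 0).2.2)]
  | (n+2) => VL G σ b r π (n+1) ++ [vnext G σ b (VL G σ b r π (n+1)) (π n) (π (n+1))]

/-- the virtual play. -/
noncomputable def Pv (G : PGame V) (σ : Strategy (regGameE G k)) (b : Bool) (r : Regs k)
    (π : ℕ → RegPos V k) (n : ℕ) : RegPos V k :=
  (VL G σ b r π (n+1)).getLastD (π n)

variable (G : PGame V) (σ : Strategy (regGameE G k)) (b : Bool) (r : Regs k)
  (π : ℕ → RegPos V k)

lemma Pv_zero : Pv G σ b r π 0 = ((π 0).1, r, (π 0).2.2) := rfl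

lemma Pv_succ (n : ℕ) :
    Pv G σ b r π (n+1) = vnext G σ b (VL G σ b r π (n+1)) (π n) (π (n+1)) := by
  show (VL G σ b r π (n+2)).getLastD (π (n+1)) = _
  rw [VL, List.getLastD_concat]

lemma VL_succ (n : ℕ) : VL G σ b r π (n+1) = VL G σ b r π n ++ [Pv G σ b r π n] := by
  cases n with
  | zero => rfl
  | succ m => rw [Pv_succ]; rfl

lemma VL_dropLast (n : ℕ) : (VL G σ b r π (n+1)).dropLast = VL G σ b r π n := by
  rw [VL_succ, List.dropLast_concat]

lemma VL_getLastD (n : ℕ) (d : RegPos V k) :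
    (VL G σ b r π (n+1)).getLastD d = Pv G σ b r π n := by
  rw [VL_succ, List.getLastD_concat]

lemma Pv_fst (n : ℕ) : (Pv G σ b r π n).1 = (π n).1 := by
  cases n with
  | zero => rfl
  | succ m => rw [Pv_succ]; rfl

lemma Pv_opt (n : ℕ) : (Pv G σ b r π n).2.2 = (π n).2.2 := by
  cases n with
  | zero => rfl
  | succ m => rw [Pv_succ]; rfl

lemma VL_ofFn (n : ℕ) : VL G σ b r π n = List.ofFn (fun j : Fin n => Pv G σ b r π j) := by
  induction n with
  | zero => rfl
  | succ m ih =>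
    rw [VL_succ, ih, List.ofFn_succ']
    simp [List.concat_eq_append]

lemma histUpTo_succ {W : Type} (f : ℕ → W) (n : ℕ) :
    histUpTo f (n+1) = histUpTo f n ++ [f n] := by
  show List.ofFn (fun j : Fin (n+1) => f j) = _
  rw [List.ofFn_succ']
  simp only [List.concat_eq_append]
  rfl

lemma histUpTo_Pv (n : ℕ) : histUpTo (Pv G σ b r π) n = VL G σ b r π n := by
  rw [VL_ofFn]; rfl

lemma recon_VL (n : ℕ) :
    recon G σ b r (histUpTo π n ++ [π n]) = VL G σ b r π (n+1) := by
  induction n with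
  | zero =>
    show recon G σ b r [π 0] = _
    simp [recon, reconGo, VL]
  | succ m ih =>
    rw [histUpTo_succ, recon_snoc' G σ b r (by simp) (π (m+1)), List.getLastD_concat, ih]
    rw [VL]

lemma Pv_succ_none (n : ℕ) (hn : (π n).2.2 = none) :
    Pv G σ b r π (n+1) = ((π (n+1)).1, (Pv G σ b r π n).2.1, (π (n+1)).2.2) := by
  have h2 : (Pv G σ b r π n).2.2 = none := by rw [Pv_opt]; exact hn
  rw [Pv_succ]
  unfold vnext vreg
  rw [VL_getLastD, h2]
  rfl

lemma Pv_succ_some (n : ℕ) (p : ℕ) (hn : (π n).2.2 = some p) :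
    Pv G σ b r π (n+1) = ((π (n+1)).1,
      newReg (Pv G σ b r π n).2.1
        (if b then extIdx (Pv G σ b r π n).2.1 p
            (σ.next (VL G σ b r π n) (Pv G σ b r π n))
         else witIdx (π n).2.1 (π (n+1)).2.1 p) p, (π (n+1)).2.2) := by
  have h2 : (Pv G σ b r π n).2.2 = some p := by rw [Pv_opt]; exact hn
  rw [Pv_succ]
  unfold vnext vreg
  rw [VL_getLastD, VL_dropLast, h2]
  rfl

open Classical in
/-- the virtual output sequence. -/
noncomputable def Cv (c : ℕ → ℕ) (n : ℕ) : ℕ :=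
  ((π n).2.2).elim 0 (fun p =>
    if b then (σ.next (VL G σ b r π n) (Pv G σ b r π n)).1
    else if (∃ i : Fin (k+1), newReg (Pv G σ b r π n).2.1 i p = (Pv G σ b r π (n+1)).2.1 ∧
              outE (Pv G σ b r π n).2.1 i p = c n)
         then c n
         else outE (Pv G σ b r π n).2.1 (witIdx (π n).2.1 (π (n+1)).2.1 p) p)

lemma Cv_none (c : ℕ → ℕ) (n : ℕ) (hn : (π n).2.2 = none) : Cv G σ b r π c n = 0 := by
  unfold Cv; rw [hn]; rfl

open Classical in
lemma Cv_some (c : ℕ → ℕ) (n : ℕ) (p : ℕ) (hn : (π n).2.2 = some p) :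
    Cv G σ b r π c n =
      if b then (σ.next (VL G σ b r π n) (Pv G σ b r π n)).1
      else if (∃ i : Fin (k+1), newReg (Pv G σ b r π n).2.1 i p = (Pv G σ b r π (n+1)).2.1 ∧
                outE (Pv G σ b r π n).2.1 i p = c n)
           then c n
           else outE (Pv G σ b r π n).2.1 (witIdx (π n).2.1 (π (n+1)).2.1 p) p := by
  unfold Cv; rw [hn]; rfl

lemma mimic_none (n : ℕ) (hn : (π n).2.2 = none) :
    (mimic G σ b r).next (histUpTo π n) (π n) =
      ((σ.next (VL G σ b r π n) (Pv G σ b r π n)).1,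
        ((σ.next (VL G σ b r π n) (Pv G σ b r π n)).2.1, (π n).2.1,
          (σ.next (VL G σ b r π n) (Pv G σ b r π n)).2.2.2)) := by
  show ((π n).2.2).elim _ _ = _
  rw [hn, recon_VL, VL_dropLast, VL_getLastD]
  rfl

lemma mimic_some (n : ℕ) (p : ℕ) (hn : (π n).2.2 = some p) :
    (mimic G σ b r).next (histUpTo π n) (π n) =
      (outE (π n).2.1 (if b then extIdx (Pv G σ b r π n).2.1 p
          (σ.next (VL G σ b r π n) (Pv G σ b r π n)) else 0) p,
       ((π n).1, newReg (π n).2.1 (if b then extIdx (Pv G σ b r π n).2.1 p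
          (σ.next (VL G σ b r π n) (Pv G σ b r π n)) else 0) p, none)) := by
  show ((π n).2.2).elim _ _ = _
  rw [hn, recon_VL, VL_dropLast, VL_getLastD]
  rfl

/-- σ's move at a virtual register position. -/
lemma sigma_move (n : ℕ) (p : ℕ) (hn : (π n).2.2 = some p) :
    (σ.next (VL G σ b r π n) (Pv G σ b r π n)).2 =
      ((π n).1, newReg (Pv G σ b r π n).2.1
        (extIdx (Pv G σ b r π n).2.1 p (σ.next (VL G σ b r π n) (Pv G σ b r π n))) p, none) ∧
    (σ.next (VL G σ b r π n) (Pv G σ b r π n)).1 =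
      outE (Pv G σ b r π n).2.1
        (extIdx (Pv G σ b r π n).2.1 p (σ.next (VL G σ b r π n) (Pv G σ b r π n))) p := by
  have hval := σ.valid (VL G σ b r π n) (Pv G σ b r π n)
  have hPv : Pv G σ b r π n = ((π n).1, (Pv G σ b r π n).2.1, some p) := by
    have h1 := Pv_fst G σ b r π n
    have h2 : (Pv G σ b r π n).2.2 = some p := by rw [Pv_opt]; exact hn
    exact Prod.ext h1 (Prod.ext rfl h2)
  set m := σ.next (VL G σ b r π n) (Pv G σ b r π n) with hm
  rw [hPv] at hval
  rcases hm2 : m.2 with ⟨w, R', o'⟩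
  rw [hm2] at hval
  cases o' with
  | some q => exact absurd hval (by simp [regGameE])
  | none =>
    obtain ⟨hw, hex⟩ := hval
    have hext := extIdx_spec (R := (Pv G σ b r π n).2.1) (p := p) (m := m)
      (by rw [hm2]; exact hex)
    rw [hm2] at hext
    refine ⟨?_, hext.2⟩
    have hR' : R' = newReg (Pv G σ b r π n).2.1 (extIdx (Pv G σ b r π n).2.1 p m) p := hext.1
    rw [hw, hR']

/-- σ's move at a virtual G-position. -/
lemma sigma_moveN (n : ℕ) (hn : (π n).2.2 = none) :
    ∃ (p' : ℕ) (w : V), (σ.next (VL G σ b r π n) (Pv G σ b r π n)).2 =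
        (w, (Pv G σ b r π n).2.1, some p') ∧
      (σ.next (VL G σ b r π n) (Pv G σ b r π n)).1 = 0 ∧
      G.edge (π n).1 p' w := by
  have hval := σ.valid (VL G σ b r π n) (Pv G σ b r π n)
  have hPv : Pv G σ b r π n = ((π n).1, (Pv G σ b r π n).2.1, none) := by
    have h1 := Pv_fst G σ b r π n
    have h2 : (Pv G σ b r π n).2.2 = none := by rw [Pv_opt]; exact hn
    exact Prod.ext h1 (Prod.ext rfl h2)
  set m := σ.next (VL G σ b r π n) (Pv G σ b r π n) with hm
  rw [hPv] at hval
  rcases hm2 : m.2 with ⟨w, R', o'⟩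
  rw [hm2] at hval
  cases o' with
  | none => exact absurd hval (by simp [regGameE])
  | some q =>
    obtain ⟨hG, hR, ho⟩ := hval
    exact ⟨q, w, by rw [hR], ho, hG⟩


end Core

section CoreLemma

variable {V : Type} {k : ℕ}

lemma core (G : PGame V) (b : Bool) (v : V) (r r'' : Regs k)
    (h : WinsFrom (regGameE G k) b (v, r, none)) :
    WinsFrom (regGameE G k) b (v, r'', none) := by
  classical
  obtain ⟨σ, hσ⟩ := h
  refine ⟨mimic G σ b r, ?_⟩
  intro π c hp h0 hag
  -- shape of real steps
  have shapeS : ∀ n p, (π n).2.2 = some p → (π (n+1)).2.2 = none ∧ (π (n+1)).1 = (π n).1 ∧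
      ∃ i : Fin (k+1), (π (n+1)).2.1 = newReg (π n).2.1 i p ∧ c n = outE (π n).2.1 i p := by
    intro n p hn
    have he := hp n
    rcases hx : π n with ⟨x, an, o⟩
    rcases hy : π (n+1) with ⟨y, an1, o1⟩
    rw [hx] at hn he
    rw [hy] at he
    dsimp only at hn
    subst hn
    cases o1 with
    | some q => exact absurd he (by simp [regGameE])
    | none =>
      obtain ⟨h1, h2⟩ := he
      exact ⟨rfl, h1, h2⟩
  have shapeN : ∀ n, (π n).2.2 = none → ∃ p, (π (n+1)).2.2 = some p ∧
      G.edge (π n).1 p (π (n+1)).1 ∧ (π (n+1)).2.1 = (π n).2.1 ∧ c n = 0 := by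
    intro n hn
    have he := hp n
    rcases hx : π n with ⟨x, an, o⟩
    rcases hy : π (n+1) with ⟨y, an1, o1⟩
    rw [hx] at hn he
    rw [hy] at he
    dsimp only at hn
    subst hn
    cases o1 with
    | none => exact absurd he (by simp [regGameE])
    | some q =>
      obtain ⟨h1, h2, h3⟩ := he
      exact ⟨q, rfl, h1, h2, h3⟩
  -- real moves forced by the mimic strategy
  have realS : b = true → ∀ n p, (π n).2.2 = some p →
      c n = outE (π n).2.1 (extIdx (Pv G σ b r π n).2.1 p
        (σ.next (VL G σ b r π n) (Pv G σ b r π n))) p ∧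
      π (n+1) = ((π n).1, newReg (π n).2.1 (extIdx (Pv G σ b r π n).2.1 p
        (σ.next (VL G σ b r π n) (Pv G σ b r π n))) p, none) := by
    intro hb n p hn
    have hown : (regGameE G k).owner (π n) = b := by
      rcases hx : π n with ⟨x, an, o⟩
      rw [hx] at hn
      dsimp only at hn
      subst hn
      rw [hb]
      rfl
    have hthis := hag n hown
    rw [mimic_some G σ b r π n p hn, if_pos hb] at hthis
    simp only [Prod.mk.injEq] at hthis
    exact hthis
  have realN : ∀ n, (π n).2.2 = none → G.owner (π n).1 = b →
      c n = (σ.next (VL G σ b r π n) (Pv G σ b r π n)).1 ∧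
      π (n+1) = ((σ.next (VL G σ b r π n) (Pv G σ b r π n)).2.1, (π n).2.1,
        (σ.next (VL G σ b r π n) (Pv G σ b r π n)).2.2.2) := by
    intro n hn hb
    have hown : (regGameE G k).owner (π n) = b := by
      rcases hx : π n with ⟨x, an, o⟩
      rw [hx] at hn
      dsimp only at hn
      subst hn
      rw [hx] at hb
      exact hb
    have hthis := hag n hown
    rw [mimic_none G σ b r π n hn] at hthis
    simp only [Prod.mk.injEq] at hthis
    exact hthis
  -- the virtual play is a play
  have hPlay : IsPlay (regGameE G k) (Pv G σ b r π) (Cv G σ b r π c) := by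
    intro n
    cases hon : (π n).2.2 with
    | none =>
      obtain ⟨p, ho1, hG, ha1, hc0⟩ := shapeN n hon
      have hPn : Pv G σ b r π n = ((π n).1, (Pv G σ b r π n).2.1, none) :=
        Prod.ext (Pv_fst G σ b r π n) (Prod.ext rfl (by rw [Pv_opt]; exact hon))
      have hPn1 := Pv_succ_none G σ b r π n hon
      rw [hPn, hPn1, Cv_none G σ b r π c n hon, ho1]
      exact ⟨hG, rfl, rfl⟩
    | some p =>
      obtain ⟨ho1, hv1, hexr⟩ := shapeS n p hon
      have hPn : Pv G σ b r π n = ((π n).1, (Pv G σ b r π n).2.1, some p) :=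
        Prod.ext (Pv_fst G σ b r π n) (Prod.ext rfl (by rw [Pv_opt]; exact hon))
      have hPn1 := Pv_succ_some G σ b r π n p hon
      rw [hPn, hPn1, hv1, ho1]
      refine ⟨rfl, ?_⟩
      by_cases hb : b = true
      · rw [if_pos hb, Cv_some G σ b r π c n p hon, if_pos hb]
        exact ⟨_, rfl, (sigma_move G σ b r π n p hon).2⟩
      · rw [if_neg hb, Cv_some G σ b r π c n p hon, if_neg hb]
        have hRW : (Pv G σ b r π (n+1)).2.1 =
            newReg (Pv G σ b r π n).2.1 (witIdx (π n).2.1 (π (n+1)).2.1 p) p := by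
          rw [Pv_succ_some G σ b r π n p hon, if_neg hb]
        by_cases hcnd : (∃ i : Fin (k+1),
            newReg (Pv G σ b r π n).2.1 i p = (Pv G σ b r π (n+1)).2.1 ∧
            outE (Pv G σ b r π n).2.1 i p = c n)
        · rw [if_pos hcnd]
          obtain ⟨i, hi1, hi2⟩ := hcnd
          exact ⟨i, hRW.symm.trans hi1.symm, hi2.symm⟩
        · rw [if_neg hcnd]
          exact ⟨_, rfl, rfl⟩
  -- the virtual play starts at (v, r, none)
  have hStart : Pv G σ b r π 0 = (v, r, none) := by
    rw [Pv_zero, h0]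
  -- the virtual play agrees with σ
  have hAg : Agrees (regGameE G k) b σ (Pv G σ b r π) (Cv G σ b r π c) := by
    intro n hown
    rw [histUpTo_Pv]
    cases hon : (π n).2.2 with
    | some p =>
      have hPn : Pv G σ b r π n = ((π n).1, (Pv G σ b r π n).2.1, some p) :=
        Prod.ext (Pv_fst G σ b r π n) (Prod.ext rfl (by rw [Pv_opt]; exact hon))
      have hb : b = true := by
        rw [hPn] at hown
        exact hown.symm
      obtain ⟨hc, hpi1⟩ := realS hb n p hon
      have hsm := sigma_move G σ b r π n p hon
      have hPn1 := Pv_succ_some G σ b r π n p hon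
      rw [Cv_some G σ b r π c n p hon, if_pos hb]
      refine Prod.ext rfl ?_
      rw [hPn1, if_pos hb, hsm.1, hpi1]
    | none =>
      have hPn : Pv G σ b r π n = ((π n).1, (Pv G σ b r π n).2.1, none) :=
        Prod.ext (Pv_fst G σ b r π n) (Prod.ext rfl (by rw [Pv_opt]; exact hon))
      have hb : G.owner (π n).1 = b := by
        rw [hPn] at hown
        exact hown
      obtain ⟨hc, hpi1⟩ := realN n hon hb
      obtain ⟨p', w, hsm1, hsm0, hsmG⟩ := sigma_moveN G σ b r π n hon
      rw [Cv_none G σ b r π c n hon]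
      refine Prod.ext hsm0.symm ?_
      have hPn1 := Pv_succ_none G σ b r π n hon
      rw [hPn1, hpi1, hsm1]
  -- the virtual play is won
  have hw := hσ (Pv G σ b r π) (Cv G σ b r π c) hPlay hStart hAg
  -- synchronization level
  set L : ℕ → ℕ := fun n => Nat.findGreatest
    (fun m => ∀ j : Fin (k+1), (j:ℕ) < m → (π n).2.1 j = (Pv G σ b r π n).2.1 j) (k+1)
    with hLdef
  have L_le : ∀ n, L n ≤ k+1 := fun n => Nat.findGreatest_le _
  have L_spec : ∀ n (j : Fin (k+1)), (j:ℕ) < L n → (π n).2.1 j = (Pv G σ b r π n).2.1 j := by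
    intro n
    have h00 : ∀ j : Fin (k+1), (j:ℕ) < 0 → (π n).2.1 j = (Pv G σ b r π n).2.1 j :=
      fun j hj => absurd hj (Nat.not_lt_zero _)
    exact Nat.findGreatest_spec
      (P := fun m => ∀ j : Fin (k+1), (j:ℕ) < m → (π n).2.1 j = (Pv G σ b r π n).2.1 j)
      (m := 0) (Nat.zero_le _) h00
  have L_ge : ∀ n m, m ≤ k+1 →
      (∀ j : Fin (k+1), (j:ℕ) < m → (π n).2.1 j = (Pv G σ b r π n).2.1 j) → m ≤ L n :=
    fun n m h1 h2 => Nat.le_findGreatest h1 h2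
  -- the key step analysis
  have hstep : ∀ n, L n ≤ L (n+1) ∧ (L n < L (n+1) ∨ Cv G σ b r π c n = c n) := by
    intro n
    cases hon : (π n).2.2 with
    | none =>
      obtain ⟨p, ho1, hG, ha1, hc0⟩ := shapeN n hon
      have hR1 : (Pv G σ b r π (n+1)).2.1 = (Pv G σ b r π n).2.1 := by
        rw [Pv_succ_none G σ b r π n hon]
      refine ⟨L_ge (n+1) (L n) (L_le n) (fun j hj => ?_), Or.inr ?_⟩
      · rw [ha1, hR1]; exact L_spec n j hj
      · rw [Cv_none G σ b r π c n hon, hc0]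
    | some p =>
      obtain ⟨ho1, hv1, iR, hiR1, hiR2⟩ := shapeS n p hon
      by_cases hb : b = true
      · -- Eve's own register move
        obtain ⟨hcI, hpiI⟩ := realS hb n p hon
        set I := extIdx (Pv G σ b r π n).2.1 p (σ.next (VL G σ b r π n) (Pv G σ b r π n))
          with hIdef
        have haI : (π (n+1)).2.1 = newReg (π n).2.1 I p := by rw [hpiI]
        have hRI : (Pv G σ b r π (n+1)).2.1 = newReg (Pv G σ b r π n).2.1 I p := by
          rw [Pv_succ_some G σ b r π n p hon, if_pos hb]
        have claim : ∀ j : Fin (k+1),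
            ((π n).2.1 j = (Pv G σ b r π n).2.1 j ∨ (j:ℕ) ≤ (I:ℕ)) →
            (π (n+1)).2.1 j = (Pv G σ b r π (n+1)).2.1 j := by
          intro j hj
          rw [haI, hRI]
          unfold newReg
          rcases lt_trichotomy j I with hlt | heq | hgt
          · rw [if_pos hlt, if_pos hlt]
          · rw [if_neg (by rw [heq]; exact lt_irrefl I), if_pos heq,
              if_neg (by rw [heq]; exact lt_irrefl I), if_pos heq]
          · have h1 : ¬ j < I := not_lt.2 hgt.le
            have h2 : j ≠ I := ne_of_gt hgt
            rw [if_neg h1, if_neg h2, if_neg h1, if_neg h2]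
            rcases hj with hj | hj
            · rw [hj]
            · exact absurd hj (not_le.2 hgt)
        refine ⟨L_ge _ _ (L_le n) (fun j hj => claim j (Or.inl (L_spec n j hj))), ?_⟩
        by_cases hd : (I:ℕ) < L n
        · refine Or.inr ?_
          rw [Cv_some G σ b r π c n p hon, if_pos hb,
            (sigma_move G σ b r π n p hon).2, hcI]
          exact outE_congr ((L_spec n I hd).symm)
        · refine Or.inl ?_
          have hgain : (I:ℕ)+1 ≤ L (n+1) :=
            L_ge (n+1) ((I:ℕ)+1) (by have := I.isLt; omega)
              (fun j hj => claim j (Or.inr (Nat.le_of_lt_succ hj)))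
          omega
      · -- opponent Eve's register move (b = false)
        set W := witIdx (π n).2.1 (π (n+1)).2.1 p with hWdef
        obtain ⟨hW1, hW2⟩ := witIdx_spec hiR1
        have hRW : (Pv G σ b r π (n+1)).2.1 = newReg (Pv G σ b r π n).2.1 W p := by
          rw [Pv_succ_some G σ b r π n p hon, if_neg hb]
        have claim : ∀ j : Fin (k+1),
            ((π n).2.1 j = (Pv G σ b r π n).2.1 j ∨ (j:ℕ) ≤ (W:ℕ)) →
            (π (n+1)).2.1 j = (Pv G σ b r π (n+1)).2.1 j := by
          intro j hj
          rw [hW1, hRW]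
          unfold newReg
          rcases lt_trichotomy j W with hlt | heq | hgt
          · rw [if_pos hlt, if_pos hlt]
          · rw [if_neg (by rw [heq]; exact lt_irrefl W), if_pos heq,
              if_neg (by rw [heq]; exact lt_irrefl W), if_pos heq]
          · have h1 : ¬ j < W := not_lt.2 hgt.le
            have h2 : j ≠ W := ne_of_gt hgt
            rw [if_neg h1, if_neg h2, if_neg h1, if_neg h2]
            rcases hj with hj | hj
            · rw [hj]
            · exact absurd hj (not_le.2 hgt)
        refine ⟨L_ge _ _ (L_le n) (fun j hj => claim j (Or.inl (L_spec n j hj))), ?_⟩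
        by_cases hd : (W:ℕ) < L n
        · refine Or.inr ?_
          rw [Cv_some G σ b r π c n p hon, if_neg hb]
          have hcond : ∃ i : Fin (k+1),
              newReg (Pv G σ b r π n).2.1 i p = (Pv G σ b r π (n+1)).2.1 ∧
              outE (Pv G σ b r π n).2.1 i p = c n := by
            have hiRW : (iR:ℕ) ≤ (W:ℕ) := hW2
            have hiRL : (iR:ℕ) < L n := lt_of_le_of_lt hiRW hd
            refine ⟨iR, ?_, ?_⟩
            · rw [hRW]
              rcases eq_or_lt_of_le hW2 with hEq | hLt
              · rw [hEq]
              · obtain ⟨hp0, hz⟩ := wit_pair hLt (hiR1.symm.trans hW1)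
                subst hp0
                funext j
                unfold newReg
                rcases lt_trichotomy j iR with h1 | h1 | h1
                · rw [if_pos h1, if_pos (h1.trans hLt)]
                · rw [if_neg (by rw [h1]; exact lt_irrefl iR), if_pos h1,
                    if_pos (by rw [h1]; exact hLt)]
                · have hn1 : ¬ j < iR := not_lt.2 h1.le
                  have hn2 : j ≠ iR := ne_of_gt h1
                  rw [if_neg hn1, if_neg hn2]
                  rcases lt_trichotomy j W with h2 | h2 | h2
                  · have hjz : (Pv G σ b r π n).2.1 j = 0 := by
                      rw [← L_spec n j (lt_trans (show (j:ℕ) < (W:ℕ) from h2) hd)]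
                      exact hz j h1 h2.le
                    rw [if_pos h2, hjz]
                    simp
                  · have hjz : (Pv G σ b r π n).2.1 j = 0 := by
                      rw [← L_spec n j (by rw [show (j:ℕ) = (W:ℕ) from congrArg Fin.val h2]; exact hd)]
                      exact hz j h1 h2.le
                    rw [if_neg (by rw [h2]; exact lt_irrefl W), if_pos h2, hjz]
                    simp
                  · have hn3 : ¬ j < W := not_lt.2 h2.le
                    have hn4 : j ≠ W := ne_of_gt h2
                    rw [if_neg hn3, if_neg hn4]
            · rw [hiR2]
              exact outE_congr ((L_spec n iR hiRL).symm)
          rw [if_pos hcond]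
        · refine Or.inl ?_
          have hgain : (W:ℕ)+1 ≤ L (n+1) :=
            L_ge (n+1) ((W:ℕ)+1) (by have := W.isLt; omega)
              (fun j hj => claim j (Or.inr (Nat.le_of_lt_succ hj)))
          omega
  -- L is monotone, hence eventually constant
  have hbdd : BddAbove (Set.range L) := ⟨k+1, by rintro x ⟨n, rfl⟩; exact L_le n⟩
  obtain ⟨N, hN⟩ := Nat.sSup_mem (⟨L 0, 0, rfl⟩ : (Set.range L).Nonempty) hbdd
  have hmono : ∀ m n, m ≤ n → L m ≤ L n := by
    intro m n hmn
    induction hmn with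
    | refl => exact le_rfl
    | step h2 ih => exact le_trans ih (hstep _).1
  have hconst : ∀ n, N ≤ n → L n = L N := by
    intro n hn
    have h1 : L n ≤ sSup (Set.range L) := le_csSup hbdd ⟨n, rfl⟩
    have h2 : L N ≤ L n := hmono N n hn
    omega
  have hev : ∀ n, N ≤ n → Cv G σ b r π c n = c n := by
    intro n hn
    rcases (hstep n).2 with hlt | heq
    · exfalso
      have e1 := hconst n hn
      have e2 := hconst (n+1) (by omega)
      omega
    · exact heq
  have hiff : EveWinsPlay (Cv G σ b r π c) ↔ EveWinsPlay c := eveWins_congr ⟨N, hev⟩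
  by_cases hb : b = true
  · rw [if_pos hb] at hw ⊢; exact hiff.1 hw
  · rw [if_neg hb] at hw ⊢; exact fun hE => hw (hiff.2 hE)

end CoreLemma

end Stmt3Aux

/-- In the `k`-register game, if a player has a winning strategy
from some position `(v, r, t)`, then that player has a winning strategy from
every position `(v, r', t')` with the same underlying vertex `v`. -/
theorem stmt3 {V : Type} (G : PGame V) (k : ℕ) (b : Bool) (v : V)
    (r r' : Fin (k + 1) → ℕ) (t t' : Option ℕ)
    (h : WinsFrom (regGameE G k) b (v, r, t)) :
    WinsFrom (regGameE G k) b (v, r', t') := by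
  classical
  have σ0 : Strategy (regGameE G k) := h.choose
  have hnone : ∃ ρ : Fin (k+1) → ℕ, WinsFrom (regGameE G k) b (v, ρ, none) := by
    cases t with
    | none => exact ⟨r, h⟩
    | some p =>
      by_cases hb : b = true
      · subst hb
        obtain ⟨o, s', he, hws⟩ := Stmt3Aux.shift_own h (by rfl)
        rcases s' with ⟨w, ρ, o2⟩
        cases o2 with
        | some q => exact absurd he (by simp [regGameE])
        | none =>
          obtain ⟨hw1, -⟩ := he
          subst hw1
          exact ⟨ρ, hws⟩
      · have hne : (regGameE G k).owner (v, r, some p) ≠ b := by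
          have h1 : (regGameE G k).owner (v, r, some p) = true := rfl
          rw [h1]; exact fun hc => hb hc.symm
        exact ⟨newReg r 0 p, Stmt3Aux.shift_opp h hne ⟨rfl, 0, rfl, rfl⟩⟩
  obtain ⟨ρ, hρ⟩ := hnone
  cases t' with
  | none => exact Stmt3Aux.core G b v ρ r' hρ
  | some p' =>
    by_cases hb : b = true
    · refine Stmt3Aux.prepend_own (o := outE r' 0 p') (s' := (v, newReg r' 0 p', none))
        ?_ ⟨rfl, 0, rfl, rfl⟩ (Stmt3Aux.core G b v ρ (newReg r' 0 p') hρ)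
      rw [hb]; rfl
    · refine Stmt3Aux.prepend_opp σ0 ?_ ?_
      · have h1 : (regGameE G k).owner (v, r', some p') = true := rfl
        rw [h1]; exact fun hc => hb hc.symm
      · intro o s' he
        rcases s' with ⟨w, ρ2, o2⟩
        cases o2 with
        | some q => exact absurd he (by simp [regGameE])
        | none =>
          obtain ⟨hw1, -⟩ := he
          rw [hw1]
          exact Stmt3Aux.core G b v ρ ρ2 hρ
end

section
/- If Eve has a strategy σ in a parity game G from position v such that every play agreeing with σ sees only finitely many odd priorities, then Eve wins the 0-register game on G from v; hence such games have register-index 0. -/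
/-!
Eve plays `σ` on the underlying moves of `G` and, being forced to, always uses the single
register. The register then holds the last priority seen, so the output after a move of
priority `p` is the parity of the larger of the last two priorities. Projecting a play of the
register game to `G` gives a play consistent with `σ`, whose priorities are eventually all
even; hence the outputs are eventually all `0`.
-/

open Filter

namespace RegGame

variable {V : Type} {G : PGame V}

theorem eveWinsPlay_of_eventually_eq_zero {c : ℕ → ℕ} (hc : ∀ᶠ m in atTop, c m = 0) :
    EveWinsPlay c := by
  obtain ⟨N, hN⟩ := eventually_atTop.mp hc
  refine ⟨0, fun n => ⟨max n N, le_max_left _ _, hN _ (le_max_right _ _)⟩, Even.zero, ?_⟩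
  rintro q hq
  obtain ⟨i, hi, rfl⟩ := hq N
  exact (hN i hi).le

theorem histUpTo_succ {α : Type} (π : ℕ → α) (i : ℕ) :
    histUpTo π (i + 1) = histUpTo π i ++ [π i] := by
  rw [histUpTo, List.ofFn_succ']
  simp [histUpTo, Fin.last]

theorem regGameE_edge_of_none {k : ℕ} {s s' : RegPos V k} {o : ℕ}
    (h : (regGameE G k).edge s o s') (hs : s.2.2 = none) :
    ∃ p, s' = (s'.1, s.2.1, some p) ∧ G.edge s.1 p s'.1 ∧ o = 0 := by
  obtain ⟨v, r, t⟩ := s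
  obtain ⟨w, r', _ | p⟩ := s' <;> subst hs
  · exact h.elim
  · obtain ⟨hE, rfl, ho⟩ := h
    exact ⟨p, rfl, hE, ho⟩

theorem regGameE_zero_edge_of_some {s s' : RegPos V 0} {o p : ℕ}
    (h : (regGameE G 0).edge s o s') (hs : s.2.2 = some p) :
    s' = (s.1, newReg s.2.1 0 p, none) ∧ o = outE s.2.1 0 p := by
  obtain ⟨v, r, t⟩ := s
  obtain ⟨w, r', _ | q⟩ := s' <;> subst hs
  · obtain ⟨rfl, i, rfl, rfl⟩ := h
    obtain rfl : i = 0 := Fin.eq_zero i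
    exact ⟨rfl, rfl⟩
  · exact h.elim

def projHist {k : ℕ} (l : List (RegPos V k)) : List V :=
  (l.filter fun s => s.2.2.isNone).map Prod.fst

def liftStrategy (σ : Strategy G) : Strategy (regGameE G 0) where
  next l s := match s with
    | (v, r, none) => (0, ((σ.next (projHist l) v).2, r, some (σ.next (projHist l) v).1))
    | (v, r, some p) => (outE r 0 p, (v, newReg r 0 p, none))
  valid l s := by
    rcases s with ⟨v, r, _ | p⟩
    · exact ⟨σ.valid (projHist l) v, rfl, rfl⟩
    · exact ⟨rfl, 0, rfl, rfl⟩

variable {π : ℕ → RegPos V 0} {c : ℕ → ℕ}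

theorem isPlay_regGameE_round (hplay : IsPlay (regGameE G 0) π c) {i : ℕ}
    (hi : (π i).2.2 = none) :
    ∃ p w, π (i + 1) = (w, (π i).2.1, some p) ∧ π (i + 2) = (w, newReg (π i).2.1 0 p, none) ∧
      G.edge (π i).1 p w ∧ c i = 0 ∧ c (i + 1) = outE (π i).2.1 0 p := by
  obtain ⟨p, hnext, hE, hc⟩ := regGameE_edge_of_none (hplay i) hi
  have hsome : (π (i + 1)).2.2 = some p := by rw [hnext]
  obtain ⟨hnext₂, hc₂⟩ := regGameE_zero_edge_of_some (hplay (i + 1)) hsome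
  rw [hnext] at hnext₂ hc₂
  exact ⟨p, _, hnext, hnext₂, hE, hc, hc₂⟩

/- If a move of `G` is due at position `e` of a play of the register game, then moves of `G` are
due at the positions `2 * j + e`, and the priority of the `j`-th one is recorded at `2 * j + e + 1`. -/
def projPlay (π : ℕ → RegPos V 0) (e : ℕ) : ℕ → V := fun j => (π (2 * j + e)).1

def projPrio (π : ℕ → RegPos V 0) (e : ℕ) : ℕ → ℕ := fun j => (π (2 * j + e + 1)).2.2.getD 0

section Projection

variable {e : ℕ} (hplay : IsPlay (regGameE G 0) π c)
include hplay

theorem isPlay_regGameE_round_proj {j : ℕ} (hj : (π (2 * j + e)).2.2 = none) :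
    π (2 * j + e + 1) = (projPlay π e (j + 1), (π (2 * j + e)).2.1, some (projPrio π e j)) ∧
    π (2 * (j + 1) + e) =
      (projPlay π e (j + 1), newReg (π (2 * j + e)).2.1 0 (projPrio π e j), none) ∧
    G.edge (projPlay π e j) (projPrio π e j) (projPlay π e (j + 1)) ∧
    c (2 * j + e) = 0 ∧ c (2 * j + e + 1) = outE (π (2 * j + e)).2.1 0 (projPrio π e j) := by
  obtain ⟨p, w, hnext, hnext₂, hE, hc, hc₂⟩ := isPlay_regGameE_round hplay hj
  rw [show 2 * j + e + 2 = 2 * (j + 1) + e by ring] at hnext₂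
  have hp : projPrio π e j = p := by simp [projPrio, hnext]
  have hw : projPlay π e (j + 1) = w := by simp [projPlay, hnext₂]
  rw [hp, hw]
  exact ⟨hnext, hnext₂, hE, hc, hc₂⟩

theorem isNone_proj (he : (π e).2.2 = none) (j : ℕ) : (π (2 * j + e)).2.2 = none := by
  induction j with
  | zero => simpa using he
  | succ j ih => rw [(isPlay_regGameE_round_proj hplay ih).2.1]

variable (he : (π e).2.2 = none)
include he

theorem isPlay_proj : IsPlay G (projPlay π e) (projPrio π e) := fun j =>
  (isPlay_regGameE_round_proj hplay (isNone_proj hplay he j)).2.2.1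

theorem projHist_histUpTo (hbase : projHist (histUpTo π e) = []) (j : ℕ) :
    projHist (histUpTo π (2 * j + e)) = histUpTo (projPlay π e) j := by
  induction j with
  | zero => simpa [histUpTo] using hbase
  | succ j ih =>
    have hsome := (isPlay_regGameE_round_proj hplay (isNone_proj hplay he j)).1
    rw [show 2 * (j + 1) + e = 2 * j + e + 1 + 1 by ring, histUpTo_succ, histUpTo_succ,
      histUpTo_succ, ← ih]
    simp [projHist, hsome, isNone_proj hplay he j, projPlay]

theorem agrees_proj {σ : Strategy G} (hag : Agrees (regGameE G 0) true (liftStrategy σ) π c)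
    (hbase : projHist (histUpTo π e) = []) :
    Agrees G true σ (projPlay π e) (projPrio π e) := by
  intro j hown
  have hnone := isNone_proj hplay he j
  have hpos : π (2 * j + e) = (projPlay π e j, (π (2 * j + e)).2.1, none) := by
    rw [← hnone]; rfl
  have hmove := hag (2 * j + e) (by rw [hpos]; exact hown)
  rw [hpos, (isPlay_regGameE_round_proj hplay hnone).1] at hmove
  simp only [liftStrategy, projHist_histUpTo hplay he hbase, Prod.mk.injEq,
    Option.some.injEq] at hmove
  exact Prod.ext hmove.2.2.2 hmove.2.1

/-- The register holds the previous priority, so an output is odd only if one of the last two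
priorities is. -/
theorem eventually_eq_zero_of_proj (hN : ∃ N, ∀ j, N ≤ j → ¬ Odd (projPrio π e j)) :
    ∀ᶠ m in atTop, c m = 0 := by
  obtain ⟨N, hN⟩ := hN
  have hround := fun j => isPlay_regGameE_round_proj hplay (isNone_proj hplay he j)
  refine eventually_atTop.mpr ⟨2 * N + e + 2, fun m hm => ?_⟩
  obtain ⟨j, rfl | rfl⟩ : ∃ j, m = 2 * j + e ∨ m = 2 * j + e + 1 := ⟨(m - e) / 2, by omega⟩
  · exact (hround j).2.2.2.1
  · obtain ⟨j, rfl⟩ : ∃ i, j = i + 1 := ⟨j - 1, by omega⟩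
    have hreg : (π (2 * (j + 1) + e)).2.1 0 = projPrio π e j := by
      rw [(hround j).2.1]; simp [newReg]
    have hprev := Nat.not_odd_iff_even.mp (hN j (by omega))
    have hcur := Nat.not_odd_iff_even.mp (hN (j + 1) (by omega))
    have hmax : Even (max (projPrio π e j) (projPrio π e (j + 1))) := by
      rcases max_choice (projPrio π e j) (projPrio π e (j + 1)) with h | h <;> rw [h] <;>
        assumption
    rw [(hround (j + 1)).2.2.2.2, outE, hreg, if_pos hmax, Fin.val_zero, mul_zero]

end Projection

theorem exists_start_of_isPlay {v : V} {r : Fin 1 → ℕ} {t : Option ℕ}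
    (hplay : IsPlay (regGameE G 0) π c) (h0 : π 0 = (v, r, t)) :
    ∃ e, (π e).2.2 = none ∧ (π e).1 = v ∧ projHist (histUpTo π e) = [] := by
  cases t with
  | none => exact ⟨0, by rw [h0], by rw [h0], rfl⟩
  | some p =>
    have h1 := (regGameE_zero_edge_of_some (hplay 0) (by rw [h0])).1
    rw [h0] at h1
    exact ⟨1, by rw [h1], by rw [h1], by simp [projHist, histUpTo, h0]⟩

end RegGame

open RegGame

/-- If Eve has a strategy `σ` in `G` from `v` such that every play
agreeing with `σ` sees only finitely many odd priorities, then Eve wins the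
`0`-register game on `G` from `v` (from every register configuration); hence
such games have register-index `0`. -/
theorem stmt4 {V : Type} (G : PGame V) (v : V)
    (h : ∃ σ : Strategy G, ∀ π c, IsPlay G π c → π 0 = v → Agrees G true σ π c →
        ∃ N, ∀ i, N ≤ i → ¬ Odd (c i)) :
    ∀ (r : Fin 1 → ℕ) (t : Option ℕ), WinsFrom (regGameE G 0) true (v, r, t) := by
  obtain ⟨σ, hσ⟩ := h
  intro r t
  refine ⟨liftStrategy σ, fun π c hplay h0 hag => ?_⟩
  rw [if_pos rfl]
  obtain ⟨e, he, hv, hbase⟩ := exists_start_of_isPlay hplay h0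
  apply eveWinsPlay_of_eventually_eq_zero
  exact eventually_eq_zero_of_proj hplay he <| hσ _ _ (isPlay_proj hplay he)
    (by simpa [projPlay] using hv) (agrees_proj hplay he hag hbase)
end

section
/- For every n ≥ 0 there exists a finite one-player parity game H_n with 2^n positions and priorities in [0..2n] in which Eve wins the parity game from every position, but for n > 0 Adam wins the (n−1)-register game on H_n; hence the register-index of H_n is at least n. -/
/-- Vertex set of the game `H n` of Lemma 3.6: `2 ^ n` positions, each a
sequence of `n` booleans choosing one of the two copies at each level. -/
def HV : ℕ → Type
  | 0 => Unit
  | n + 1 => Bool × HV n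

/-- The initial position of `H n`. -/
def Hinit : (n : ℕ) → HV n
  | 0 => ()
  | n + 1 => (false, Hinit n)

/-- Edges of `H n`: `H 0` is a single vertex with a self-loop of priority `0`;
`H (n+1)` consists of two disjoint copies of `H n` together with an edge of
priority `2(n+1) - 1` from the initial position of the first copy to that of
the second, and an edge of priority `2(n+1)` back. -/
def Hedge : (n : ℕ) → HV n → ℕ → HV n → Prop
  | 0, _, p, _ => p = 0
  | n + 1, (b, x), p, (b', y) =>
      (b = b' ∧ Hedge n x p y) ∨
      (x = Hinit n ∧ y = Hinit n ∧
        ((b = false ∧ b' = true ∧ p = 2 * (n + 1) - 1) ∨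
         (b = true ∧ b' = false ∧ p = 2 * (n + 1))))

/-- The one-player parity game `H n` (all positions belong to Adam). -/
def Hgame (n : ℕ) : PGame (HV n) := ⟨fun _ => false, Hedge n⟩


/-! ### Auxiliary material -/

instance HVdeq : (n : ℕ) → DecidableEq (HV n)
  | 0 => fun a b => isTrue (by cases a; cases b; rfl)
  | n + 1 => have := HVdeq n; (inferInstance : DecidableEq (Bool × HV n))

noncomputable instance HVfin : (n : ℕ) → Fintype (HV n)
  | 0 => (inferInstance : Fintype Unit)
  | n + 1 => have := HVfin n; (inferInstance : Fintype (Bool × HV n))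

lemma HVcard : ∀ n, Nat.card (HV n) = 2 ^ n
  | 0 => by
      have : Nat.card Unit = 1 := Nat.card_unique
      simpa [HV] using this
  | n + 1 => by
      have h : Nat.card (Bool × HV n) = Nat.card Bool * Nat.card (HV n) := Nat.card_prod _ _
      have hb : Nat.card Bool = 2 := by simp [Nat.card_eq_fintype_card]
      have := HVcard n
      show Nat.card (Bool × HV n) = 2 ^ (n + 1)
      rw [h, hb, this]; ring

lemma Hedge_le : ∀ n (x : HV n) p (y : HV n), Hedge n x p y → p ≤ 2 * n
  | 0, _, p, _, h => by simp [Hedge] at h; omega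
  | n + 1, x, p, y, h => by
      obtain ⟨b, x⟩ := x; obtain ⟨b', y⟩ := y
      rcases h with ⟨_, h⟩ | ⟨_, _, (⟨_, _, hp⟩ | ⟨_, _, hp⟩)⟩
      · have := Hedge_le n x p y h; omega
      · omega
      · omega

lemma Hedge_self : ∀ n (v : HV n), Hedge n v 0 v
  | 0, _ => rfl
  | n + 1, v => Or.inl ⟨rfl, Hedge_self n v.2⟩

lemma infOcc_shift (c : ℕ → ℕ) (T q : ℕ) : InfOcc (fun i => c (T + i)) q ↔ InfOcc c q := by
  constructor
  · intro h N
    obtain ⟨i, hi, he⟩ := h N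
    exact ⟨T + i, by omega, he⟩
  · intro h N
    obtain ⟨i, hi, he⟩ := h (T + N)
    refine ⟨i - T, by omega, ?_⟩
    have : T + (i - T) = i := by omega
    simpa [this] using he

lemma flip_exists (B : ℕ → Bool) : ∀ b a, a ≤ b → B a = true → B b = false →
    ∃ k, a ≤ k ∧ k < b ∧ B k = true ∧ B (k + 1) = false := by
  intro b
  induction b with
  | zero => intro a ha hA hB; interval_cases a; rw [hA] at hB; exact absurd hB (by simp)
  | succ b ih =>
      intro a ha hA hB
      by_cases hb : B b = true
      · have hab : a ≤ b := by
          rcases Nat.lt_succ_iff_lt_or_eq.mp (Nat.lt_succ_of_le ha) with h | h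
          · omega
          · subst h; rw [hA] at hB; exact absurd hB (by simp)
        exact ⟨b, hab, by omega, hb, hB⟩
      · have hab : a ≤ b := by
          rcases Nat.eq_or_lt_of_le ha with h | h
          · subst h; rw [hA] at hB; exact absurd hB (by simp)
          · omega
        obtain ⟨k, h1, h2, h3, h4⟩ := ih a hab hA (by simpa using hb)
        exact ⟨k, h1, by omega, h3, h4⟩

lemma eveWinsAll : ∀ n (π : ℕ → HV n) (c : ℕ → ℕ), IsPlay (Hgame n) π c → EveWinsPlay c := by
  intro n
  induction n with
  | zero =>
      intro π c hp
      have hc : ∀ i, c i = 0 := fun i => hp i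
      exact ⟨0, fun N => ⟨N, le_rfl, hc N⟩, Even.zero,
        fun q hq => by obtain ⟨i, _, he⟩ := hq 0; have := hc i; omega⟩
  | succ n ih =>
      intro π c hp
      set Bl : ℕ → Bool := fun i => (π i).1 with hBl
      have hedge : ∀ i, ((π i).1 = (π (i+1)).1 ∧ Hedge n (π i).2 (c i) (π (i+1)).2) ∨
          ((π i).2 = Hinit n ∧ (π (i+1)).2 = Hinit n ∧
            (((π i).1 = false ∧ (π (i+1)).1 = true ∧ c i = 2 * (n+1) - 1) ∨
             ((π i).1 = true ∧ (π (i+1)).1 = false ∧ c i = 2 * (n+1)))) := fun i => hp i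
      by_cases hfin : ∃ T, ∀ i, T ≤ i → Bl i = Bl (i + 1)
      · obtain ⟨T, hT⟩ := hfin
        have hsub : IsPlay (Hgame n) (fun i => (π (T + i)).2) (fun i => c (T + i)) := by
          intro i
          rcases hedge (T + i) with ⟨_, h⟩ | ⟨_, _, (⟨h1, h2, _⟩ | ⟨h1, h2, _⟩)⟩
          · show Hedge n _ _ _
            have : T + i + 1 = T + (i + 1) := by omega
            rwa [this] at h
          all_goals
            exact absurd (hT (T + i) (by omega)) (by simp [hBl, h1, h2])
        obtain ⟨P, h1, h2, h3⟩ := ih _ _ hsub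
        refine ⟨P, (infOcc_shift c T P).mp h1, h2, fun q hq => h3 q ((infOcc_shift c T q).mpr hq)⟩
      · push_neg at hfin
        have hcross : ∀ N, ∃ i, N ≤ i ∧ c i = 2 * (n + 1) := by
          intro N
          obtain ⟨i, hiN, hne⟩ := hfin N
          have cross_out : ∀ j, (π j).1 = true → (π (j+1)).1 = false → c j = 2 * (n+1) := by
            intro j h1 h2
            rcases hedge j with ⟨h, _⟩ | ⟨_, _, (⟨h1', _, _⟩ | ⟨_, _, hc⟩)⟩
            · rw [h1, h2] at h; exact absurd h (by simp)
            · rw [h1] at h1'; exact absurd h1' (by simp)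
            · exact hc
          rcases hb1 : Bl i with _ | _
          · -- Bl i = false, so Bl (i+1) = true
            have hb2 : Bl (i + 1) = true := by
              cases hb2 : Bl (i + 1)
              · rw [hb1, hb2] at hne; simp at hne
              · rfl
            obtain ⟨j, hjN, hne2⟩ := hfin (i + 1)
            cases hb3 : Bl j with
            | true =>
                have hb4 : Bl (j+1) = false := by
                  cases hb4 : Bl (j + 1)
                  · rfl
                  · rw [hb3, hb4] at hne2; simp at hne2
                exact ⟨j, by omega, cross_out j hb3 hb4⟩
            | false =>
                obtain ⟨k, hk1, _, hk3, hk4⟩ := flip_exists Bl j (i+1) hjN hb2 hb3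
                exact ⟨k, by omega, cross_out k hk3 hk4⟩
          · -- Bl i = true, so Bl (i+1) = false
            have hb2 : Bl (i + 1) = false := by
              cases hb2 : Bl (i + 1)
              · rfl
              · rw [hb1, hb2] at hne; simp at hne
            exact ⟨i, hiN, cross_out i hb1 hb2⟩
        refine ⟨2 * (n + 1), fun N => hcross N, by simp [Nat.even_add], fun q hq => ?_⟩
        obtain ⟨i, _, he⟩ := hq 0
        have := Hedge_le (n+1) (π i) (c i) (π (i+1)) (hp i)
        omega


/-! ### Machinery for Adam's strategy in the register game -/

/-- Number of "open" levels of a position of `H n`. -/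
def countOpen : (n : ℕ) → HV n → ℕ
  | 0, _ => 0
  | n + 1, v => (cond v.1 1 0) + countOpen n v.2

/-- Close the lowest open level (meaningful when `v ≠ Hinit n`). -/
def closeLowest : (n : ℕ) → HV n → ℕ × HV n
  | 0, _ => (0, ())
  | n + 1, v => if v.2 = Hinit n then (2 * (n + 1), (false, Hinit n))
      else ((closeLowest n v.2).1, (v.1, (closeLowest n v.2).2))

/-- Adam's positional strategy in `H n`, as a function of the position and the
register contents `ρ` (level `j` uses register `j - 1`). -/
def amove : (n : ℕ) → HV n → (ℕ → ℕ) → ℕ × HV n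
  | 0, _, _ => (0, ())
  | n + 1, v, ρ =>
      if ρ n ≤ 2 * n then
        if v.2 = Hinit n then
          if v.1 then (2 * (n + 1), (false, Hinit n)) else (2 * (n + 1) - 1, (true, Hinit n))
        else ((closeLowest n v.2).1, (v.1, (closeLowest n v.2).2))
      else ((amove n v.2 ρ).1, (v.1, (amove n v.2 ρ).2))

/-- Register contents after Eve picks register `k` on priority `p`. -/
def postρ (ρ : ℕ → ℕ) (k p : ℕ) : ℕ → ℕ :=
  fun j => if j < k then 0 else if j = k then p else max (ρ j) p

/-- The output when Eve picks register `k` on priority `p`. -/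
def outO (ρ : ℕ → ℕ) (k p : ℕ) : ℕ := if Even (max (ρ k) p) then 2 * k else 2 * k + 1

/-- Rank digit of one level. -/
def upsilonQ (ρ : ℕ → ℕ) (q : ℕ) (b : Bool) : ℕ :=
  if 2 * q < ρ q then (if Odd (ρ q) then 0 else cond b 4 2) else cond b 3 1

/-- The rank certificate for even output `2 * i`. -/
def rankf (B i : ℕ) : (n : ℕ) → HV n → (ℕ → ℕ) → ℕ
  | 0, _, _ => 0
  | n + 1, v, ρ =>
      if i ≤ n then
        (upsilonQ ρ n v.1 * B + (if ρ n ≤ 2 * n then countOpen n v.2 else 0)) * B ^ (2 * (n - i))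
          + rankf B i n v.2 ρ
      else 0

lemma countOpen_le : ∀ n (v : HV n), countOpen n v ≤ n
  | 0, _ => le_rfl
  | n + 1, ⟨b, x⟩ => by
      have := countOpen_le n x
      cases b <;> simp [countOpen] <;> omega

lemma countOpen_init : ∀ n, countOpen n (Hinit n) = 0
  | 0 => rfl
  | n + 1 => by simp [countOpen, Hinit, countOpen_init n]

lemma cl_le : ∀ n (v : HV n), (closeLowest n v).1 ≤ 2 * n
  | 0, _ => le_rfl
  | n + 1, ⟨b, x⟩ => by
      by_cases h2 : x = Hinit n
      · simp [closeLowest, h2]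
      · have := cl_le n x
        simp [closeLowest, h2]; omega

lemma cl_count : ∀ n (v : HV n), v ≠ Hinit n →
    countOpen n (closeLowest n v).2 + 1 = countOpen n v
  | 0, v, h => absurd (by cases v; rfl) h
  | n + 1, ⟨b, x⟩, h => by
      by_cases h2 : x = Hinit n
      · have hb : b = true := by
          cases hb : b
          · exfalso; apply h; rw [hb, h2]; rfl
          · rfl
        simp [closeLowest, h2, countOpen, hb, countOpen_init n]
      · have := cl_count n x h2
        simp [closeLowest, h2, countOpen]
        omega

lemma cl_edge : ∀ n (v : HV n), v ≠ Hinit n →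
    Hedge n v (closeLowest n v).1 (closeLowest n v).2
  | 0, v, h => absurd (by cases v; rfl) h
  | n + 1, ⟨b, x⟩, h => by
      by_cases h2 : x = Hinit n
      · have hb : b = true := by
          cases hb : b
          · exfalso; apply h; rw [hb, h2]; rfl
          · rfl
        subst hb; subst h2
        show Hedge (n+1) _ _ _
        simp only [closeLowest, if_pos rfl]
        exact Or.inr ⟨rfl, rfl, Or.inr ⟨rfl, rfl, rfl⟩⟩
      · have := cl_edge n x h2
        show Hedge (n+1) _ _ _
        simp only [closeLowest, if_neg h2]
        exact Or.inl ⟨rfl, this⟩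

lemma am_le : ∀ n (v : HV n) ρ, (amove n v ρ).1 ≤ 2 * n
  | 0, _, _ => le_rfl
  | n + 1, ⟨b, x⟩, ρ => by
      simp only [amove]
      split
      · split
        · split <;> simp <;> omega
        · have := cl_le n x; simpa using by omega
      · have := am_le n x ρ; simpa using by omega

lemma am_edge : ∀ n (v : HV n) ρ, Hedge n v (amove n v ρ).1 (amove n v ρ).2
  | 0, _, _ => rfl
  | n + 1, ⟨b, x⟩, ρ => by
      show Hedge (n+1) _ _ _
      simp only [amove]
      split
      · split
        case isTrue h2 =>
          subst h2
          split
          case isTrue hb => subst hb; exact Or.inr ⟨rfl, rfl, Or.inr ⟨rfl, rfl, rfl⟩⟩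
          case isFalse hb =>
            have hb' : b = false := by simpa using hb
            subst hb'
            exact Or.inr ⟨rfl, rfl, Or.inl ⟨rfl, rfl, rfl⟩⟩
        case isFalse h2 => exact Or.inl ⟨rfl, cl_edge n x h2⟩
      · exact Or.inl ⟨rfl, am_edge n x ρ⟩

lemma rankf_hi {B i : ℕ} : ∀ n (v : HV n) ρ, n ≤ i → rankf B i n v ρ = 0
  | 0, _, _, _ => rfl
  | n + 1, v, ρ, h => by simp only [rankf]; rw [if_neg (by omega)]

lemma upsilon_le (ρ : ℕ → ℕ) (q : ℕ) (b : Bool) : upsilonQ ρ q b ≤ 4 := by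
  unfold upsilonQ; split
  · split
    · omega
    · cases b <;> simp
  · cases b <;> simp

lemma rank_lt : ∀ n (v : HV n) ρ {i B : ℕ}, i ≤ n → n + 5 ≤ B →
    rankf B i n v ρ < B ^ (2 * (n - i))
  | 0, _, _, _, _, _, _ => by simpa [rankf] using Nat.one_pos
  | n + 1, v, ρ, i, B, hi, hB => by
      by_cases hin : i ≤ n
      · have hrec := rank_lt n v.2 ρ (B := B) hin (by omega)
        have hups : upsilonQ ρ n v.1 * B ≤ 4 * B := Nat.mul_le_mul (upsilon_le ρ n v.1) (le_refl B)
        have hco : (if ρ n ≤ 2 * n then countOpen n v.2 else 0) ≤ n := by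
          have := countOpen_le n v.2; split <;> omega
        have h5 : 5 * B ≤ B * B := Nat.mul_le_mul (show (5:ℕ) ≤ B by omega) (le_refl B)
        have hd : upsilonQ ρ n v.1 * B + (if ρ n ≤ 2 * n then countOpen n v.2 else 0) + 1 ≤ B * B := by
          omega
        have hexp : 2 * (n + 1 - i) = 2 * (n - i) + 2 := by omega
        rw [rankf, if_pos hin, hexp]
        set E := B ^ (2 * (n - i)) with hE
        set d := upsilonQ ρ n v.1 * B + (if ρ n ≤ 2 * n then countOpen n v.2 else 0) with hdd
        have step1 : d * E + rankf B i n v.2 ρ < (d + 1) * E := by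
          have : (d + 1) * E = d * E + E := by ring
          omega
        have step2 : (d + 1) * E ≤ (B * B) * E := Nat.mul_le_mul hd (le_refl E)
        have step3 : (B * B) * E = B ^ (2 * (n - i) + 2) := by rw [hE]; ring
        omega
      · have hi1 : i = n + 1 := by omega
        rw [rankf, if_neg hin, hi1]
        simpa using Nat.one_pos


lemma ups_semi {ρ : ℕ → ℕ} {q : ℕ} (b : Bool) (h : ρ q ≤ 2 * q) :
    upsilonQ ρ q b = cond b 3 1 := by
  unfold upsilonQ; rw [if_neg (by omega)]

lemma ups_stuck {ρ : ℕ → ℕ} {q : ℕ} (b : Bool) (h : 2 * q < ρ q) (he : Even (ρ q)) :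
    upsilonQ ρ q b = cond b 4 2 := by
  unfold upsilonQ; rw [if_pos h, if_neg (Nat.not_odd_iff_even.mpr he)]

lemma ups_poison {ρ : ℕ → ℕ} {q : ℕ} (b : Bool) (h : 2 * q < ρ q) (ho : Odd (ρ q)) :
    upsilonQ ρ q b = 0 := by
  unfold upsilonQ; rw [if_pos h, if_pos ho]

lemma rankf_succ {B i n : ℕ} (b : Bool) (x : HV n) (ρ : ℕ → ℕ) (h : i ≤ n) :
    rankf B i (n+1) (b, x) ρ =
      (upsilonQ ρ n b * B + (if ρ n ≤ 2 * n then countOpen n x else 0)) * B ^ (2 * (n - i))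
        + rankf B i n x ρ := by
  show (if i ≤ n then _ else 0) = _
  rw [if_pos h]

lemma dig_lt {d d' E r r' : ℕ} (h : d' + 1 ≤ d) (h2 : r' < E) : d' * E + r' < d * E + r := by
  have h3 : (d' + 1) * E ≤ d * E := Nat.mul_le_mul h (le_refl E)
  have h4 : (d' + 1) * E = d' * E + E := by ring
  omega

lemma step_main : ∀ (n : ℕ) (v : HV n) (ρ : ℕ → ℕ) (k i B : ℕ), k < n → n + 5 ≤ B →
    (outO ρ k (amove n v ρ).1 ≤ 2 * i →
      rankf B i n (amove n v ρ).2 (postρ ρ k (amove n v ρ).1) ≤ rankf B i n v ρ) ∧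
    (outO ρ k (amove n v ρ).1 = 2 * i →
      rankf B i n (amove n v ρ).2 (postρ ρ k (amove n v ρ).1) < rankf B i n v ρ) := by
  intro n
  induction n with
  | zero => intro v ρ k i B hk _; omega
  | succ n IH =>
    intro v ρ k i B hk hB
    obtain ⟨b, x⟩ := v
    have hobnd : ∀ P : ℕ, outO ρ k P ≤ 2 * k + 1 := by
      intro P; unfold outO; split <;> omega
    by_cases hin : n + 1 ≤ i
    · constructor
      · intro _
        rw [rankf_hi (n+1) _ _ hin, rankf_hi (n+1) (b,x) ρ hin]
      · intro h
        exfalso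
        have := hobnd (amove (n+1) (b,x) ρ).1
        omega
    push_neg at hin
    have hile : i ≤ n := by omega
    by_cases h1 : ρ n ≤ 2 * n
    · -- top level is "semi": Adam acts at the top
      by_cases h2 : x = Hinit n
      · subst h2
        cases b with
        | true =>
          -- close the top level, priority 2(n+1)
          have hpv : (amove (n+1) (true, Hinit n) ρ).1 = 2 * (n+1) := by
            simp [amove, h1]
          have hwv : (amove (n+1) (true, Hinit n) ρ).2 = (false, Hinit n) := by
            simp [amove, h1]; rfl
          rw [hpv, hwv]
          set ρ' := postρ ρ k (2 * (n+1)) with hρ'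
          have hρ'n : ρ' n = 2 * (n + 1) := by
            rw [hρ']; unfold postρ
            by_cases hkn : k = n
            · rw [if_neg (by omega), if_pos hkn.symm]
            · rw [if_neg (by omega), if_neg (fun h => hkn h.symm)]
              exact max_eq_right (by omega)
          have hlt : rankf B i (n+1) (false, Hinit n) ρ' < rankf B i (n+1) (true, Hinit n) ρ := by
            rw [rankf_succ _ _ _ hile, rankf_succ _ _ _ hile]
            rw [ups_semi true h1, ups_stuck false (by omega) (by rw [hρ'n]; exact ⟨n+1, by ring⟩)]
            rw [if_pos h1, if_neg (by omega), countOpen_init n]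
            apply dig_lt
            · simp; omega
            · exact rank_lt n _ _ hile (by omega)
          exact ⟨fun _ => le_of_lt hlt, fun _ => hlt⟩
        | false =>
          -- open the top level, priority 2(n+1) - 1
          have hpv : (amove (n+1) (false, Hinit n) ρ).1 = 2 * n + 1 := by
            simp [amove, h1]; omega
          have hwv : (amove (n+1) (false, Hinit n) ρ).2 = (true, Hinit n) := by
            simp [amove, h1]; rfl
          rw [hpv, hwv]
          set ρ' := postρ ρ k (2 * n + 1) with hρ'
          have hρ'n : ρ' n = 2 * n + 1 := by
            rw [hρ']; unfold postρ
            by_cases hkn : k = n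
            · rw [if_neg (by omega), if_pos hkn.symm]
            · rw [if_neg (by omega), if_neg (fun h => hkn h.symm)]
              exact max_eq_right (by omega)
          have hlt : rankf B i (n+1) (true, Hinit n) ρ' < rankf B i (n+1) (false, Hinit n) ρ := by
            rw [rankf_succ _ _ _ hile, rankf_succ _ _ _ hile]
            rw [ups_semi false h1, ups_poison true (by omega) (by rw [hρ'n]; exact ⟨n, by ring⟩)]
            rw [if_pos h1, if_neg (by omega), countOpen_init n]
            apply dig_lt
            · simp; omega
            · exact rank_lt n _ _ hile (by omega)
          exact ⟨fun _ => le_of_lt hlt, fun _ => hlt⟩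
      · -- close the lowest open level inside x
        have hpv : (amove (n+1) (b, x) ρ).1 = (closeLowest n x).1 := by
          simp [amove, h1, h2]
        have hwv : (amove (n+1) (b, x) ρ).2 = (b, (closeLowest n x).2) := by
          simp [amove, h1, h2]; rfl
        rw [hpv, hwv]
        have hple : (closeLowest n x).1 ≤ 2 * n := cl_le n x
        set ρ' := postρ ρ k (closeLowest n x).1 with hρ'
        have hρ'n : ρ' n ≤ 2 * n := by
          rw [hρ']; unfold postρ
          by_cases hkn : k = n
          · rw [if_neg (by omega), if_pos hkn.symm]; exact hple
          · rw [if_neg (by omega), if_neg (fun h => hkn h.symm)]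
            exact max_le h1 hple
        have hlt : rankf B i (n+1) (b, (closeLowest n x).2) ρ' < rankf B i (n+1) (b, x) ρ := by
          rw [rankf_succ _ _ _ hile, rankf_succ _ _ _ hile]
          rw [ups_semi b h1, ups_semi b hρ'n]
          rw [if_pos h1, if_pos hρ'n]
          apply dig_lt
          · have := cl_count n x h2
            omega
          · exact rank_lt n _ _ hile (by omega)
        exact ⟨fun _ => le_of_lt hlt, fun _ => hlt⟩
    · -- top level not semi: defer to the lower levels
      have hpv : (amove (n+1) (b, x) ρ).1 = (amove n x ρ).1 := by
        simp only [amove]; rw [if_neg h1]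
      have hwv : (amove (n+1) (b, x) ρ).2 = (b, (amove n x ρ).2) := by
        simp only [amove]; rw [if_neg h1]
      rw [hpv, hwv]
      have hple : (amove n x ρ).1 ≤ 2 * n := am_le n x ρ
      by_cases hkn : k = n
      · -- Eve picks the top register
        have hρk : ρ k = ρ n := by rw [hkn]
        have hρ'n : postρ ρ k (amove n x ρ).1 n = (amove n x ρ).1 := by
          unfold postρ; rw [if_neg (by omega), if_pos hkn.symm]
        have hmax : max (ρ k) (amove n x ρ).1 = ρ n := by
          rw [hρk]; exact max_eq_left (by omega)
        by_cases hpar : Even (ρ n)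
        · -- output 2k = 2n : strict descent via the top digit
          have main : rankf B i (n+1) (b, (amove n x ρ).2) (postρ ρ k (amove n x ρ).1)
              < rankf B i (n+1) (b, x) ρ := by
            rw [rankf_succ _ _ _ hile, rankf_succ _ _ _ hile]
            rw [ups_stuck b (by omega) hpar, ups_semi b (by rw [hρ'n]; exact hple)]
            rw [if_neg h1, if_pos (by rw [hρ'n]; exact hple)]
            apply dig_lt
            · have h4 := countOpen_le n (amove n x ρ).2
              cases b <;> simp <;> omega
            · exact rank_lt n _ _ hile (by omega)
          exact ⟨fun _ => le_of_lt main, fun _ => main⟩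
        · -- output 2k+1 : no constraint can hold
          have ho : outO ρ k (amove n x ρ).1 = 2 * k + 1 := by
            unfold outO; rw [hmax, if_neg hpar]
          constructor
          · intro h; exfalso; omega
          · intro h; exfalso; omega
      · -- Eve picks a lower register: top digit unchanged, recurse
        have hkn' : k < n := by omega
        have hρ'n : postρ ρ k (amove n x ρ).1 n = ρ n := by
          unfold postρ; rw [if_neg (by omega), if_neg (fun h => hkn h.symm)]
          exact max_eq_left (by omega)
        have hups : upsilonQ (postρ ρ k (amove n x ρ).1) n b = upsilonQ ρ n b := by
          unfold upsilonQ; rw [hρ'n]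
        have IH' := IH x ρ k i B hkn' (by omega)
        constructor
        · intro h
          rw [rankf_succ _ _ _ hile, rankf_succ _ _ _ hile, hups, hρ'n]
          simp only [if_neg h1]
          exact Nat.add_le_add_left (IH'.1 h) _
        · intro h
          rw [rankf_succ _ _ _ hile, rankf_succ _ _ _ hile, hups, hρ'n]
          simp only [if_neg h1]
          exact Nat.add_lt_add_left (IH'.2 h) _


lemma ups_congr {ρ₁ ρ₂ : ℕ → ℕ} {q : ℕ} (b : Bool) (h : ρ₁ q = ρ₂ q) :
    upsilonQ ρ₁ q b = upsilonQ ρ₂ q b := by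
  unfold upsilonQ; rw [h]

lemma rank_congr {B i : ℕ} : ∀ n (v : HV n) (ρ₁ ρ₂ : ℕ → ℕ),
    (∀ j, j < n → ρ₁ j = ρ₂ j) → rankf B i n v ρ₁ = rankf B i n v ρ₂
  | 0, _, _, _, _ => rfl
  | n + 1, v, ρ₁, ρ₂, h => by
      obtain ⟨b, x⟩ := v
      have hn := h n (by omega)
      have hrec := rank_congr (B := B) (i := i) n x ρ₁ ρ₂ (fun j hj => h j (by omega))
      show (if i ≤ n then _ else 0) = (if i ≤ n then _ else 0)
      by_cases hile : i ≤ n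
      · rw [if_pos hile, if_pos hile, ups_congr b hn, hn, hrec]
      · rw [if_neg hile, if_neg hile]

/-- Extend registers to a function on all of `ℕ`. -/
def regρ {m : ℕ} (r : Fin (m + 1) → ℕ) : ℕ → ℕ :=
  fun j => if h : j < m + 1 then r ⟨j, h⟩ else 0

lemma regρ_post {m : ℕ} (r : Fin (m + 1) → ℕ) (ii : Fin (m + 1)) (P : ℕ) :
    ∀ j, j < m + 1 → regρ (newReg r ii P) j = postρ (regρ r) ii.1 P j := by
  intro j hj
  simp only [regρ, postρ, newReg, dif_pos hj, Fin.lt_def, Fin.ext_iff]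

lemma outE_outO {m : ℕ} (r : Fin (m + 1) → ℕ) (ii : Fin (m + 1)) (P : ℕ) :
    outE r ii P = outO (regρ r) ii.1 P := by
  unfold outE outO regρ
  rw [dif_pos ii.isLt]

lemma edgeE_some_inv {m : ℕ} {v : HV (m + 1)} {r : Fin (m + 1) → ℕ} {p o : ℕ}
    {s' : RegPos (HV (m + 1)) m}
    (h : (regGameE (Hgame (m + 1)) m).edge (v, r, some p) o s') :
    ∃ ii : Fin (m + 1), s' = (v, newReg r ii p, none) ∧ o = outE r ii p := by
  obtain ⟨w', r', fl'⟩ := s'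
  cases fl' with
  | none =>
      obtain ⟨hw, ii, hr, ho⟩ := h
      exact ⟨ii, by rw [hw, hr], ho⟩
  | some q => exact (h : False).elim

/-- Adam's strategy in the register game. -/
def astrat (m : ℕ) : Strategy (regGameE (Hgame (m + 1)) m) where
  next := fun _ s =>
    match s with
    | (v, r, none) =>
        (0, ((amove (m + 1) v (regρ r)).2, r, some (amove (m + 1) v (regρ r)).1))
    | (v, r, some p) => (outE r 0 p, (v, newReg r 0 p, none))
  valid := by
    intro l s
    match s with
    | (v, r, none) => exact ⟨am_edge (m + 1) v (regρ r), rfl, rfl⟩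
    | (v, r, some p) => exact ⟨rfl, 0, rfl, rfl⟩

lemma adam_wins (m : ℕ) :
    WinsFrom (regGameE (Hgame (m + 1)) m) false (Hinit (m + 1), fun _ => 0, none) := by
  classical
  refine ⟨astrat m, ?_⟩
  intro π c hplay h0 hagree
  rw [if_neg (by simp)]
  intro hEve
  -- the play decomposes into Adam/Eve rounds
  have key : ∀ a, ∀ v r, π (2 * a) = ((v, r, none) : RegPos (HV (m + 1)) m) →
      c (2 * a) = 0 ∧
      π (2 * a + 1) = ((amove (m + 1) v (regρ r)).2, r, some (amove (m + 1) v (regρ r)).1) ∧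
      ∃ ii : Fin (m + 1),
        π (2 * (a + 1)) = ((amove (m + 1) v (regρ r)).2,
          newReg r ii (amove (m + 1) v (regρ r)).1, none) ∧
        c (2 * a + 1) = outE r ii (amove (m + 1) v (regρ r)).1 := by
    intro a v r hvr
    have hown : (regGameE (Hgame (m + 1)) m).owner (π (2 * a)) = false := by rw [hvr]; rfl
    have hag := hagree (2 * a) hown
    rw [hvr] at hag
    have hc0 : c (2 * a) = 0 := congrArg Prod.fst hag
    have hπ1 : π (2 * a + 1)
        = ((amove (m + 1) v (regρ r)).2, r, some (amove (m + 1) v (regρ r)).1) :=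
      congrArg Prod.snd hag
    have hedge := hplay (2 * a + 1)
    rw [hπ1] at hedge
    obtain ⟨ii, hs, ho⟩ := edgeE_some_inv hedge
    have h2 : 2 * a + 1 + 1 = 2 * (a + 1) := by ring
    rw [h2] at hs
    exact ⟨hc0, hπ1, ii, hs, ho⟩
  have shape : ∀ a, ∃ v r, π (2 * a) = ((v, r, none) : RegPos (HV (m + 1)) m) := by
    intro a
    induction a with
    | zero => exact ⟨Hinit (m + 1), fun _ => 0, by simpa using h0⟩
    | succ a ih =>
        obtain ⟨v, r, hvr⟩ := ih
        obtain ⟨_, _, ii, hs, _⟩ := key a v r hvr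
        exact ⟨_, _, hs⟩
  choose V R hVR using shape
  have hV0 : π 0 = (V 0, R 0, none) := hVR 0
  have step : ∀ a, c (2 * a) = 0 ∧ ∃ ii : Fin (m + 1),
      R (a + 1) = newReg (R a) ii (amove (m + 1) (V a) (regρ (R a))).1 ∧
      c (2 * a + 1) = outE (R a) ii (amove (m + 1) (V a) (regρ (R a))).1 ∧
      V (a + 1) = (amove (m + 1) (V a) (regρ (R a))).2 := by
    intro a
    obtain ⟨hc0, _, ii, hs, ho⟩ := key a (V a) (R a) (hVR a)
    rw [hVR (a + 1)] at hs
    have h1 : V (a + 1) = (amove (m + 1) (V a) (regρ (R a))).2 :=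
      congrArg (fun s => s.1) hs
    have h2 : R (a + 1) = newReg (R a) ii (amove (m + 1) (V a) (regρ (R a))).1 :=
      congrArg (fun s => s.2.1) hs
    exact ⟨hc0, ii, h2, ho, h1⟩
  -- register bound
  have hRb : ∀ a j, R a j ≤ 2 * (m + 1) := by
    intro a
    induction a with
    | zero =>
        have h00 : ((Hinit (m+1), fun _ => 0, none) : RegPos (HV (m+1)) m) = (V 0, R 0, none) := by
          rw [← h0, hV0]
        have : (fun _ => 0 : Fin (m+1) → ℕ) = R 0 := congrArg (fun s => s.2.1) h00
        intro j; rw [← this]; exact Nat.zero_le _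
    | succ a ih =>
        intro j
        obtain ⟨_, ii, hR, _, _⟩ := step a
        have hP := am_le (m + 1) (V a) (regρ (R a))
        rw [hR]
        unfold newReg
        have h1 := ih j
        split_ifs <;> omega
  -- priority bound along the play
  have hcb : ∀ t, c t ≤ 2 * m + 1 := by
    intro t
    rcases Nat.even_or_odd t with he | ho
    · obtain ⟨a, ha⟩ := he
      have : t = 2 * a := by omega
      rw [this, (step a).1]; omega
    · obtain ⟨a, ha⟩ := ho
      obtain ⟨_, ii, _, hc, _⟩ := step a
      rw [ha, hc]
      unfold outE
      have := ii.isLt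
      split <;> omega
  -- the maximal priority occurring infinitely often
  obtain ⟨pstar, hinf, heven, hmaxp⟩ := hEve
  obtain ⟨i, hi⟩ := heven
  have hple : pstar ≤ 2 * m + 1 := by
    obtain ⟨t, _, ht⟩ := hinf 0
    have := hcb t; omega
  have him : i ≤ m := by omega
  -- beyond some point all priorities are ≤ pstar
  have hbig : ∀ q, ∃ N, pstar < q → ∀ t, N ≤ t → c t ≠ q := by
    intro q
    by_cases hq : pstar < q
    · by_cases hocc : InfOcc c q
      · exact absurd (hmaxp q hocc) (by omega)
      · unfold InfOcc at hocc
        push_neg at hocc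
        obtain ⟨N, hN⟩ := hocc
        exact ⟨N, fun _ t ht hc => (hN t ht) hc⟩
    · exact ⟨0, fun h => absurd h hq⟩
  choose Nf hNf using hbig
  set T0 := Finset.sup (Finset.range (2 * m + 2)) Nf with hT0def
  have hT0 : ∀ t, T0 ≤ t → c t ≤ pstar := by
    intro t ht
    by_contra hgt
    push_neg at hgt
    have h1 : c t ∈ Finset.range (2 * m + 2) := by
      have := hcb t; simp; omega
    have h2 : Nf (c t) ≤ T0 := Finset.le_sup h1
    exact hNf (c t) hgt t (by omega) rfl
  -- infinitely many Eve-steps with output pstar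
  have hodd : ∀ N, ∃ a, N ≤ a ∧ c (2 * a + 1) = pstar := by
    intro N
    by_cases hi0 : pstar = 0
    · refine ⟨max N T0, le_max_left _ _, ?_⟩
      have := hT0 (2 * max N T0 + 1) (by have := le_max_right N T0; omega)
      omega
    · obtain ⟨t, ht, hct⟩ := hinf (max (2 * N + 1) T0)
      rcases Nat.even_or_odd t with he | hodd
      · obtain ⟨a, ha⟩ := he
        have : t = 2 * a := by omega
        rw [this, (step a).1] at hct
        exact absurd hct.symm hi0
      · obtain ⟨a, ha⟩ := hodd
        refine ⟨a, by have := le_max_left (2 * N + 1) T0; omega, ?_⟩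
        rw [← ha]; exact hct
  -- a strictly increasing sequence of such Eve-steps, beyond T0
  let seq : ℕ → ℕ := fun j => Nat.rec (hodd T0).choose (fun _ prev => (hodd (prev + 1)).choose) j
  have hseq0 : T0 ≤ seq 0 ∧ c (2 * seq 0 + 1) = pstar := (hodd T0).choose_spec
  have hseqS : ∀ j, seq j + 1 ≤ seq (j + 1) ∧ c (2 * seq (j + 1) + 1) = pstar :=
    fun j => (hodd (seq j + 1)).choose_spec
  have hseqT : ∀ j, T0 ≤ seq j := by
    intro j
    induction j with
    | zero => exact hseq0.1
    | succ j ih => have := (hseqS j).1; omega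
  have hseqmono : ∀ j j', j < j' → seq j < seq j' := by
    intro j j' hjj
    induction j' with
    | zero => omega
    | succ j' ih =>
        have := (hseqS j').1
        rcases Nat.lt_succ_iff_lt_or_eq.mp hjj with h | h
        · have := ih h; omega
        · subst h; omega
  have hseqc : ∀ j, c (2 * seq j + 1) = pstar := by
    intro j
    cases j with
    | zero => exact hseq0.2
    | succ j => exact (hseqS j).2
  -- pigeonhole on the states after those steps
  have _inst : Finite (HV (m + 1) × (Fin (m + 1) → Fin (2 * (m + 1) + 1))) := by
    have := HVfin (m + 1)
    infer_instance
  obtain ⟨j₁, j₂, hne, heq⟩ := Finite.exists_ne_map_eq_of_infinite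
    (fun j : ℕ => ((V (seq j + 1), fun q => (⟨R (seq j + 1) q, by have := hRb (seq j + 1) q; omega⟩ :
      Fin (2 * (m + 1) + 1))) : HV (m + 1) × (Fin (m + 1) → Fin (2 * (m + 1) + 1))))
  -- wlog j₁ < j₂
  wlog hlt : j₁ < j₂ generalizing j₁ j₂
  · exact this j₂ j₁ (Ne.symm hne) heq.symm (by omega)
  have hVeq : V (seq j₁ + 1) = V (seq j₂ + 1) := congrArg Prod.fst heq
  have hReq : R (seq j₁ + 1) = R (seq j₂ + 1) := by
    funext q
    have := congrArg (fun z => (z.2 q).1) heq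
    exact this
  -- rank descent
  set B := m + 6 with hBdef
  set Rk : ℕ → ℕ := fun a => rankf B i (m + 1) (V a) (regρ (R a)) with hRk
  have hstep : ∀ a, (c (2 * a + 1) ≤ 2 * i → Rk (a + 1) ≤ Rk a) ∧
      (c (2 * a + 1) = 2 * i → Rk (a + 1) < Rk a) := by
    intro a
    obtain ⟨_, ii, hR, hc, hV⟩ := step a
    have hm := step_main (m + 1) (V a) (regρ (R a)) ii.1 i B ii.isLt (by omega)
    have hout : c (2 * a + 1) = outO (regρ (R a)) ii.1 (amove (m + 1) (V a) (regρ (R a))).1 := by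
      rw [hc, outE_outO]
    have hrankeq : Rk (a + 1) = rankf B i (m + 1) (amove (m + 1) (V a) (regρ (R a))).2
        (postρ (regρ (R a)) ii.1 (amove (m + 1) (V a) (regρ (R a))).1) := by
      rw [hRk]
      simp only
      rw [hV, hR]
      exact rank_congr (m + 1) _ _ _ (regρ_post (R a) ii _)
    constructor
    · intro h
      rw [hrankeq]
      exact hm.1 (by rw [← hout]; exact h)
    · intro h
      rw [hrankeq]
      exact hm.2 (by rw [← hout]; exact h)
  have chain : ∀ a b, a ≤ b → (∀ s, a ≤ s → s < b → c (2 * s + 1) ≤ 2 * i) → Rk b ≤ Rk a := by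
    intro a b hab
    induction b, hab using Nat.le_induction with
    | base => intro _; exact le_rfl
    | succ b hab ih =>
        intro h
        have h1 : Rk (b + 1) ≤ Rk b := (hstep b).1 (by have := h b hab (by omega); omega)
        have h2 : Rk b ≤ Rk a := ih (fun s hs hs' => h s hs (by omega))
        omega
  -- the contradiction
  have hieq : pstar = 2 * i := by omega
  have hfinal1 : Rk (seq j₂ + 1) < Rk (seq j₂) := (hstep (seq j₂)).2 (by rw [hseqc j₂, hieq])
  have hfinal2 : Rk (seq j₂) ≤ Rk (seq j₁ + 1) := by
    apply chain
    · have := hseqmono j₁ j₂ hlt; omega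
    · intro s hs hs'
      have := hT0 (2 * s + 1) (by have := hseqT j₁; omega)
      omega
  have hfinal3 : Rk (seq j₁ + 1) = Rk (seq j₂ + 1) := by
    rw [hRk]
    simp only
    rw [hVeq, hReq]
  omega

/-- For every `n ≥ 0` the one-player parity game `H n` has `2 ^ n`
positions and priorities in `[0 .. 2n]`, Eve wins the parity game from every
position, but for `n > 0` Adam wins the `(n-1)`-register game on `H n`; hence
the register-index of `H n` is at least `n`. -/
theorem stmt6 (n : ℕ) :
    Nat.card (HV n) = 2 ^ n ∧
    (∀ x p y, Hedge n x p y → p ≤ 2 * n) ∧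
    (∀ v, WinsFrom (Hgame n) true v) ∧
    (0 < n → WinsFrom (regGameE (Hgame n) (n - 1)) false (Hinit n, fun _ => 0, none)) := by
  refine ⟨HVcard n, fun x p y h => Hedge_le n x p y h, ?_, ?_⟩
  · intro v
    refine ⟨⟨fun _ w => (0, w), fun l w => Hedge_self n w⟩, ?_⟩
    intro π c hplay _ _
    simp only [if_pos rfl]
    exact eveWinsAll n π c hplay
  · intro hn
    obtain ⟨m, rfl⟩ : ∃ m, n = m + 1 := ⟨n - 1, by omega⟩
    exact adam_wins m
end
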